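/- arXiv:1212.2607 — 7 statements merged into one kernel-verified Lean document; each statement's English description precedes it below -/
import Mathlib

section
/- Let m ≥ 2 and δ > 0, and let {A(t)}_{t≥0} be a sequence of m×m doubly stochastic matrices with A_{ii}(t) ≥ δ for all t ≥ 0 and all i ∈ [m]. Then for any initial vector x(0) ∈ ℝ^m, the sequence x(t) defined by x(t+1) = A(t) x(t) converges, i.e., lim_{t→∞} x(t) exists. -/
/-!
The energy `∑ i, x t i ^ 2` is nonincreasing and drops by at least `δ (x (t+1) i - x t i) ^ 2`,
so the steps of every coordinate tend to `0`. A doubly stochastic matrix can only increase the sum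
of the `k` smallest entries of a vector (bathtub principle), and that sum is bounded by `k / m`
times the invariant total sum; hence it converges for every `k`, and so does every order statistic
of `x t`. Each coordinate is therefore eventually close to the finite set of limiting order
statistics, and a sequence with vanishing steps that clusters at a finite set converges.
-/

open Filter Topology Finset Matrix

theorem Finset.exists_pos_forall_eq_of_dist_lt {X : Type*} [MetricSpace X] (D : Finset X) :
    ∃ r > 0, ∀ d ∈ D, ∀ d' ∈ D, dist d d' < r → d = d' := by
  have hpair : ∀ p ∈ D ×ˢ D, ∀ᶠ r in 𝓝[>] (0 : ℝ), dist p.1 p.2 < r → p.1 = p.2 := by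
    rintro ⟨d, d'⟩ -
    by_cases h : d = d'
    · exact .of_forall fun _ _ => h
    · filter_upwards [nhdsWithin_le_nhds (gt_mem_nhds (dist_pos.2 h))] with r hr hlt
      exact absurd hlt (not_lt.2 hr.le)
  obtain ⟨r, hsep, hr⟩ := (((D ×ˢ D).eventually_all.2 hpair).and self_mem_nhdsWithin).exists
  exact ⟨r, hr, fun d hd d' hd' => hsep (d, d') (mem_product.2 ⟨hd, hd'⟩)⟩

theorem Finset.exists_tendsto_of_dist_succ_tendsto_zero {X : Type*} [MetricSpace X]
    {u : ℕ → X} (D : Finset X)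
    (hstep : Tendsto (fun t => dist (u (t + 1)) (u t)) atTop (𝓝 0))
    (hnear : ∀ ε > 0, ∀ᶠ t in atTop, ∃ d ∈ D, dist (u t) d < ε) :
    ∃ L, Tendsto u atTop (𝓝 L) := by
  obtain ⟨r, hr, hsep⟩ := D.exists_pos_forall_eq_of_dist_lt
  obtain ⟨T, hT⟩ := ((hstep.eventually (gt_mem_nhds (by positivity : 0 < r / 3))).and
    (hnear (r / 3) (by positivity))).exists_forall_of_atTop
  obtain ⟨L, hLD, hL⟩ := (hT T le_rfl).2
  -- two points of `D` within `r` of each other coincide, so `u` cannot leave the ball around `L`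
  have hstay : ∀ t ≥ T, dist (u t) L < r / 3 := by
    intro t ht
    induction t, ht using Nat.le_induction with
    | base => exact hL
    | succ t ht ih =>
      obtain ⟨d, hdD, hd⟩ := (hT (t + 1) (by omega)).2
      have hdL : dist d L < r := by
        linarith [dist_comm d (u (t + 1)), dist_triangle d (u (t + 1)) (u t),
          dist_triangle d (u t) L, (hT t ht).1]
      rwa [← hsep d hdD L hLD hdL]
  refine ⟨L, Metric.tendsto_atTop.2 fun ε hε => ?_⟩
  obtain ⟨T', hT'⟩ := (hnear (min ε (r / 3)) (by positivity)).exists_forall_of_atTop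
  refine ⟨max T T', fun t ht => ?_⟩
  obtain ⟨d, hdD, hd⟩ := hT' t (le_of_max_le_right ht)
  have hdL : dist d L < r := by
    linarith [dist_comm d (u t), dist_triangle d (u t) L, hstay t (le_of_max_le_left ht),
      min_le_right ε (r / 3)]
  rw [← hsep d hdD L hLD hdL]
  exact hd.trans_le (min_le_left _ _)

theorem tendsto_zero_of_le_sub_succ {V f : ℕ → ℝ} (hV : ∀ t, 0 ≤ V t) (hf : ∀ t, 0 ≤ f t)
    (hfV : ∀ t, f t ≤ V t - V (t + 1)) : Tendsto f atTop (𝓝 0) := by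
  refine (summable_of_sum_range_le (c := V 0) hf fun n => ?_).tendsto_atTop_zero
  calc ∑ t ∈ range n, f t ≤ ∑ t ∈ range n, (V t - V (t + 1)) := sum_le_sum fun t _ => hfV t
    _ = V 0 - V n := sum_range_sub' V n
    _ ≤ V 0 := by linarith [hV n]

section DoublyStochastic

variable {n : Type*} [Fintype n] [DecidableEq n] {A : Matrix n n ℝ}

theorem sum_sum_mul_sq_sub_mulVec (hA : A ∈ doublyStochastic ℝ n) (x : n → ℝ) :
    ∑ i, ∑ j, A i j * (x j - (A *ᵥ x) i) ^ 2 = ∑ j, x j ^ 2 - ∑ i, (A *ᵥ x) i ^ 2 := by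
  have hrow (i : n) : ∑ j, A i j * (x j - (A *ᵥ x) i) ^ 2
      = ∑ j, A i j * x j ^ 2 - (A *ᵥ x) i ^ 2 := by
    set y := (A *ᵥ x) i with hy
    have hexp (j : n) :
        A i j * (x j - y) ^ 2 = A i j * x j ^ 2 - 2 * y * (A i j * x j) + y ^ 2 * A i j := by
      ring
    simp only [hexp, sum_add_distrib, sum_sub_distrib, ← mul_sum,
      sum_row_of_mem_doublyStochastic hA]
    rw [hy, mulVec, dotProduct]
    ring
  simp only [hrow, sum_sub_distrib]
  rw [sum_comm]
  simp only [← sum_mul, sum_col_of_mem_doublyStochastic hA, one_mul]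

theorem mul_sq_mulVec_sub_le (hA : A ∈ doublyStochastic ℝ n) {δ : ℝ} {i : n} (hδ : δ ≤ A i i)
    (x : n → ℝ) : δ * ((A *ᵥ x) i - x i) ^ 2 ≤ ∑ j, x j ^ 2 - ∑ i, (A *ᵥ x) i ^ 2 := by
  have hterm : ∀ i j, 0 ≤ A i j * (x j - (A *ᵥ x) i) ^ 2 := fun i j =>
    mul_nonneg (nonneg_of_mem_doublyStochastic hA) (sq_nonneg _)
  rw [← sum_sum_mul_sq_sub_mulVec hA, ← neg_sub, neg_sq]
  calc δ * (x i - (A *ᵥ x) i) ^ 2 ≤ A i i * (x i - (A *ᵥ x) i) ^ 2 :=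
        mul_le_mul_of_nonneg_right hδ (sq_nonneg _)
    _ ≤ ∑ j, A i j * (x j - (A *ᵥ x) i) ^ 2 :=
        single_le_sum (fun j _ => hterm i j) (mem_univ i)
    _ ≤ ∑ i, ∑ j, A i j * (x j - (A *ᵥ x) i) ^ 2 :=
        single_le_sum (f := fun i => ∑ j, A i j * (x j - (A *ᵥ x) i) ^ 2)
          (fun i _ => sum_nonneg fun j _ => hterm i j) (mem_univ i)

end DoublyStochastic

theorem Finset.sum_le_sum_mul_of_le_of_le {ι : Type*} [Fintype ι] (S : Finset ι) {x c : ι → ℝ}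
    {θ : ℝ} (hS : ∀ i ∈ S, x i ≤ θ) (hSc : ∀ i ∉ S, θ ≤ x i) (hc0 : ∀ i, 0 ≤ c i)
    (hc1 : ∀ i, c i ≤ 1) (hc : ∑ i, c i = #S) : ∑ i ∈ S, x i ≤ ∑ i, c i * x i := by
  classical
  have hin : 0 ≤ ∑ i ∈ S, (1 - c i) * (θ - x i) :=
    sum_nonneg fun i hi => mul_nonneg (by linarith [hc1 i]) (by linarith [hS i hi])
  have hout : 0 ≤ ∑ i ∈ Sᶜ, c i * (x i - θ) :=
    sum_nonneg fun i hi => mul_nonneg (hc0 i) (by linarith [hSc i (mem_compl.1 hi)])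
  have hθ : ∑ i ∈ S, c i * θ + ∑ i ∈ Sᶜ, c i * θ = #S * θ := by
    rw [sum_add_sum_compl, ← sum_mul, hc]
  have hcx := sum_add_sum_compl S fun i => c i * x i
  simp only [mul_sub, sub_mul, one_mul, sum_sub_distrib, sum_const, nsmul_eq_mul] at hin hout
  linarith

theorem Monotone.sum_filter_lt_le_sum_mul {m k : ℕ} {s c : Fin m → ℝ} (hs : Monotone s)
    (hk : k ≤ m) (hc0 : ∀ j, 0 ≤ c j) (hc1 : ∀ j, c j ≤ 1) (hc : ∑ j, c j = k) :
    ∑ j : Fin m with j.val < k, s j ≤ ∑ j, c j * s j := by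
  obtain _ | m := m
  · simp
  refine sum_le_sum_mul_of_le_of_le _ (θ := s ⟨k - 1, by omega⟩) (fun j hj => hs ?_)
    (fun j hj => hs ?_) hc0 hc1 ?_
  · simp only [mem_filter, mem_univ, true_and] at hj
    exact Fin.le_iff_val_le_val.2 (by simp only; omega)
  · simp only [mem_filter, mem_univ, true_and] at hj
    exact Fin.mk_le_of_le_val (by omega)
  · rw [hc, Fin.card_filter_val_lt, min_eq_right hk]

noncomputable def sortedPrefixSum {m : ℕ} (x : Fin m → ℝ) (k : ℕ) : ℝ :=
  ∑ j : Fin m with j.val < k, x (Tuple.sort x j)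

theorem sortedPrefixSum_succ_sub {m : ℕ} (x : Fin m → ℝ) (j : Fin m) :
    sortedPrefixSum x (j + 1) - sortedPrefixSum x j = x (Tuple.sort x j) := by
  simp only [sortedPrefixSum, sum_filter, Nat.lt_succ_iff_lt_or_eq, ite_or, ← sum_sub_distrib]
  rw [Fintype.sum_eq_single j fun i hi => by simp [Fin.val_ne_of_ne hi]]
  simp

theorem sortedPrefixSum_le_mul_sum {m k : ℕ} (x : Fin m → ℝ) (hk : k ≤ m) :
    sortedPrefixSum x k ≤ k / m * ∑ i, x i := by
  have hc : ∑ _j : Fin m, (k / m : ℝ) = k := by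
    obtain rfl | hm := eq_or_ne m 0
    · simp [Nat.le_zero.1 hk]
    · simp [field]
  calc sortedPrefixSum x k ≤ ∑ j, k / m * x (Tuple.sort x j) :=
        (Tuple.monotone_sort x).sum_filter_lt_le_sum_mul hk (fun _ => by positivity)
          (fun _ => div_le_one_of_le₀ (by exact_mod_cast hk) (by positivity)) hc
    _ = k / m * ∑ i, x i := by rw [← mul_sum, Equiv.sum_comp (Tuple.sort x) x]

theorem sortedPrefixSum_le_mulVec {m k : ℕ} {A : Matrix (Fin m) (Fin m) ℝ}
    (hA : A ∈ doublyStochastic ℝ (Fin m)) (x : Fin m → ℝ) (hk : k ≤ m) :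
    sortedPrefixSum x k ≤ sortedPrefixSum (A *ᵥ x) k := by
  set P : Finset (Fin m) := {j | j.val < k}
  set τ := Tuple.sort (A *ᵥ x)
  set c : Fin m → ℝ := fun i => ∑ j ∈ P, A (τ j) i
  have hc1 (i : Fin m) : c i ≤ 1 := calc
    c i ≤ ∑ j, A (τ j) i :=
        sum_le_sum_of_subset_of_nonneg (subset_univ P) fun _ _ _ =>
          nonneg_of_mem_doublyStochastic hA
    _ = 1 := by rw [Equiv.sum_comp τ (fun l => A l i), sum_col_of_mem_doublyStochastic hA]
  have hcsum : ∑ i, c i = k := by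
    rw [sum_comm]
    simp [sum_row_of_mem_doublyStochastic hA, P, Fin.card_filter_val_lt, hk]
  have hprefix : sortedPrefixSum (A *ᵥ x) k = ∑ i, c i * x i := by
    simp only [sortedPrefixSum, mulVec, dotProduct, c, sum_mul]
    exact sum_comm
  rw [hprefix, ← Equiv.sum_comp (Tuple.sort x) (fun i => c i * x i)]
  exact (Tuple.monotone_sort x).sum_filter_lt_le_sum_mul hk
    (fun _ => sum_nonneg fun _ _ => nonneg_of_mem_doublyStochastic hA) (fun _ => hc1 _)
    (by rw [Equiv.sum_comp (Tuple.sort x) c, hcsum])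

section Dynamics

variable {m : ℕ} {A : ℕ → Matrix (Fin m) (Fin m) ℝ} {x : ℕ → Fin m → ℝ}

theorem tendsto_dist_succ_of_mem_doublyStochastic {δ : ℝ}
    (hA : ∀ t, A t ∈ doublyStochastic ℝ (Fin m)) (hδ : 0 < δ) (hdiag : ∀ t i, δ ≤ A t i i)
    (hx : ∀ t, x (t + 1) = A t *ᵥ x t) (i : Fin m) :
    Tendsto (fun t => dist (x (t + 1) i) (x t i)) atTop (𝓝 0) := by
  have hsq : Tendsto (fun t => δ * (x (t + 1) i - x t i) ^ 2) atTop (𝓝 0) :=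
    tendsto_zero_of_le_sub_succ (V := fun t => ∑ j, x t j ^ 2)
      (fun t => sum_nonneg fun _ _ => sq_nonneg _) (fun t => by positivity)
      (fun t => by rw [hx t]; exact mul_sq_mulVec_sub_le (hA t) (hdiag t i) (x t))
  simpa [Real.dist_eq, Real.sqrt_sq_eq_abs, hδ.ne'] using (hsq.const_mul δ⁻¹).sqrt

theorem exists_tendsto_sortedPrefixSum (hA : ∀ t, A t ∈ doublyStochastic ℝ (Fin m))
    (hx : ∀ t, x (t + 1) = A t *ᵥ x t) {k : ℕ} (hk : k ≤ m) :
    ∃ s, Tendsto (fun t => sortedPrefixSum (x t) k) atTop (𝓝 s) := by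
  have hsum (t : ℕ) : ∑ i, x t i = ∑ i, x 0 i := by
    induction t with
    | zero => rfl
    | succ t ih => rw [hx t, sum_mulVec_of_mem_doublyStochastic (hA t), ih]
  refine ⟨_, tendsto_atTop_ciSup (monotone_nat_of_le_succ fun t => ?_) ⟨k / m * ∑ i, x 0 i, ?_⟩⟩
  · rw [hx t]
    exact sortedPrefixSum_le_mulVec (hA t) (x t) hk
  · rintro _ ⟨t, rfl⟩
    exact hsum t ▸ sortedPrefixSum_le_mul_sum (x t) hk

theorem exists_tendsto_sort (hA : ∀ t, A t ∈ doublyStochastic ℝ (Fin m))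
    (hx : ∀ t, x (t + 1) = A t *ᵥ x t) (j : Fin m) :
    ∃ s, Tendsto (fun t => x t (Tuple.sort (x t) j)) atTop (𝓝 s) := by
  obtain ⟨a, ha⟩ := exists_tendsto_sortedPrefixSum hA hx (k := j + 1) j.isLt
  obtain ⟨b, hb⟩ := exists_tendsto_sortedPrefixSum hA hx j.isLt.le
  exact ⟨a - b, by simpa only [sortedPrefixSum_succ_sub] using ha.sub hb⟩

theorem exists_tendsto_of_tendsto_sort {w : Fin m → ℝ}
    (hw : ∀ j, Tendsto (fun t => x t (Tuple.sort (x t) j)) atTop (𝓝 (w j)))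
    (hstep : ∀ i, Tendsto (fun t => dist (x (t + 1) i) (x t i)) atTop (𝓝 0)) :
    ∃ L, Tendsto x atTop (𝓝 L) := by
  have hnear (i : Fin m) (ε : ℝ) (hε : 0 < ε) :
      ∀ᶠ t in atTop, ∃ d ∈ univ.image w, dist (x t i) d < ε := by
    filter_upwards [eventually_all.2 fun j => (hw j).eventually (Metric.ball_mem_nhds _ hε)]
      with t ht
    refine ⟨w ((Tuple.sort (x t)).symm i), mem_image_of_mem _ (mem_univ _), ?_⟩
    simpa using ht ((Tuple.sort (x t)).symm i)
  choose L hL using fun i => (univ.image w).exists_tendsto_of_dist_succ_tendsto_zero (hstep i)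
    (hnear i)
  exact ⟨L, tendsto_pi_nhds.2 hL⟩

end Dynamics

theorem stmt0_general (m : ℕ) (δ : ℝ) (hδ : 0 < δ)
    (A : ℕ → Matrix (Fin m) (Fin m) ℝ)
    (hnonneg : ∀ t i j, 0 ≤ A t i j)
    (hrow : ∀ t i, ∑ j, A t i j = 1)
    (hcol : ∀ t j, ∑ i, A t i j = 1)
    (hdiag : ∀ t i, δ ≤ A t i i)
    (x : ℕ → Fin m → ℝ)
    (hx : ∀ t, x (t + 1) = (A t).mulVec (x t)) :
    ∃ L : Fin m → ℝ, Tendsto x atTop (𝓝 L) := by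
  have hA (t : ℕ) : A t ∈ doublyStochastic ℝ (Fin m) :=
    mem_doublyStochastic_iff_sum.2 ⟨hnonneg t, hrow t, hcol t⟩
  choose w hw using exists_tendsto_sort hA hx
  exact exists_tendsto_of_tendsto_sort hw (tendsto_dist_succ_of_mem_doublyStochastic hA hδ hdiag hx)

/-- For a sequence of m×m doubly stochastic matrices with diagonal
entries bounded below by δ > 0, the backward-product dynamics x(t+1) = A(t) x(t)
converges for any initial vector x(0). -/
theorem stmt0 (m : ℕ) (hm : 2 ≤ m) (δ : ℝ) (hδ : 0 < δ)
    (A : ℕ → Matrix (Fin m) (Fin m) ℝ)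
    (hnonneg : ∀ t i j, 0 ≤ A t i j)
    (hrow : ∀ t i, ∑ j, A t i j = 1)
    (hcol : ∀ t j, ∑ i, A t i j = 1)
    (hdiag : ∀ t i, δ ≤ A t i i)
    (x : ℕ → Fin m → ℝ)
    (hx : ∀ t, x (t + 1) = (A t).mulVec (x t)) :
    ∃ L : Fin m → ℝ, Tendsto x atTop (𝓝 L) :=
  stmt0_general m δ hδ A hnonneg hrow hcol hdiag x hx
end

section
/- Let m ≥ 2 and δ > 0, and let {A(t)}_{t≥0} be a sequence of m×m doubly stochastic matrices with A_{ii}(t) ≥ δ for all t ≥ 0 and all i ∈ [m]. Let x(t+1) = A(t)x(t) for an arbitrary x(0) ∈ ℝ^m. Define the infinite flow graph G = ([m], E) with E = {{i₁,i₂} : i₁ ≠ i₂ and Σ_{t=0}^∞ A_{i₁i₂}(t) = ∞}. Then for any two agents i₁, i₂ belonging to the same connected component of G, lim_{t→∞} (x_{i₁}(t) − x_{i₂}(t)) = 0. -/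
/-!
`V(t) = ∑ᵢ xᵢ(t)²` is a Lyapunov function: a doubly stochastic step with diagonal entries `≥ δ`
lowers it by at least `δ/2 · ∑ᵢⱼ Aᵢⱼ(t) (xᵢ(t) - xⱼ(t))²`, so these dissipations are summable and
in particular `x(t+1) - x(t) → 0`. The sum of the `k` smallest entries of `x(t)` is nondecreasing
in `t` and bounded, so the sorted entries of `x(t)` converge, to `l₁, …, lₘ` say. At a gap
`l_k < l_{k+1}` the entries eventually stay out of a band around `(l_k + l_{k+1}) / 2` and, moving
by less than its width, can no longer cross it: the `k` smallest agents eventually form a fixed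
set `S`, at positive distance from the others, and the summable dissipation then bounds the flow
across `S`. Two agents joined by an infinite-flow edge thus lie on the same side of every gap, which
squeezes both between two sorted entries with a common limit.
-/

open Filter Topology Finset
open scoped Matrix

section BottomSum

variable {n : Type*} [Fintype n]

noncomputable def bottomSum (x : n → ℝ) (k : ℕ) : ℝ :=
  if h : (univ.powersetCard k : Finset (Finset n)).Nonempty then
    (univ.powersetCard k).inf' h fun S => ∑ i ∈ S, x i
  else 0

def IsBottomSet (x : n → ℝ) (k : ℕ) (S : Finset n) : Prop :=
  S.card = k ∧ ∑ i ∈ S, x i = bottomSum x k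

/-- For `1 ≤ k ≤ Fintype.card n`, the `k`-th smallest entry of `x`. -/
noncomputable def sortedEntry (x : n → ℝ) (k : ℕ) : ℝ :=
  bottomSum x k - bottomSum x (k - 1)

variable {x : n → ℝ} {k : ℕ} {S : Finset n}

theorem bottomSum_le_sum (x : n → ℝ) (S : Finset n) :
    bottomSum x S.card ≤ ∑ i ∈ S, x i := by
  have hS : S ∈ univ.powersetCard S.card := mem_powersetCard_univ.2 rfl
  rw [bottomSum, dif_pos ⟨S, hS⟩]
  exact inf'_le _ hS

theorem exists_isBottomSet (x : n → ℝ) (hk : k ≤ Fintype.card n) :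
    ∃ S, IsBottomSet x k S := by
  have hne : (univ.powersetCard k : Finset (Finset n)).Nonempty :=
    powersetCard_nonempty.2 (by simpa using hk)
  obtain ⟨S, hS, hmin⟩ := exists_mem_eq_inf' hne fun S => ∑ i ∈ S, x i
  exact ⟨S, mem_powersetCard_univ.1 hS, by rw [bottomSum, dif_pos hne, hmin]⟩

theorem isBottomSet_empty (x : n → ℝ) : IsBottomSet x 0 ∅ := by
  obtain ⟨S, hS⟩ := exists_isBottomSet x (Nat.zero_le _)
  rwa [card_eq_zero.1 hS.1] at hS

theorem isBottomSet_univ (x : n → ℝ) : IsBottomSet x (Fintype.card n) univ := by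
  obtain ⟨S, hS⟩ := exists_isBottomSet x le_rfl
  rwa [eq_univ_of_card S hS.1] at hS

variable [DecidableEq n]

theorem IsBottomSet.le_sortedEntry (hS : IsBottomSet x k S) {i : n} (hi : i ∈ S) :
    x i ≤ sortedEntry x k := by
  have h := bottomSum_le_sum x (S.erase i)
  rw [card_erase_of_mem hi, hS.1, sum_erase_eq_sub hi, hS.2] at h
  rw [sortedEntry]
  linarith

theorem IsBottomSet.sortedEntry_succ_le (hS : IsBottomSet x k S) {j : n} (hj : j ∉ S) :
    sortedEntry x (k + 1) ≤ x j := by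
  have h := bottomSum_le_sum x (insert j S)
  rw [card_insert_of_notMem hj, hS.1, sum_insert hj, hS.2] at h
  rw [sortedEntry, Nat.add_sub_cancel]
  linarith

theorem IsBottomSet.le_of_mem_of_notMem (hS : IsBottomSet x k S) {i j : n} (hi : i ∈ S)
    (hj : j ∉ S) : x i ≤ x j := by
  have hij : j ∉ S.erase i := fun h => hj (mem_of_mem_erase h)
  have h := bottomSum_le_sum x (insert j (S.erase i))
  rw [card_insert_of_notMem hij, card_erase_add_one hi, hS.1, sum_insert hij,
    sum_erase_eq_sub hi, hS.2] at h
  linarith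

theorem isBottomSet_filter_lt (hk : k ≤ Fintype.card n) {θ : ℝ} (hlt : sortedEntry x k < θ)
    (hle : θ ≤ sortedEntry x (k + 1)) : IsBottomSet x k (univ.filter fun i => x i < θ) := by
  obtain ⟨S, hS⟩ := exists_isBottomSet x hk
  suffices S = univ.filter fun i => x i < θ by rwa [← this]
  ext i
  rw [mem_filter_univ]
  by_cases hi : i ∈ S
  · exact iff_of_true hi ((hS.le_sortedEntry hi).trans_lt hlt)
  · exact iff_of_false hi (hle.trans (hS.sortedEntry_succ_le hi)).not_gt

theorem bottomSum_le_sum_mul (hk : k ≤ Fintype.card n) {w : n → ℝ} (hw0 : ∀ j, 0 ≤ w j)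
    (hw1 : ∀ j, w j ≤ 1) (hw : ∑ j, w j = k) : bottomSum x k ≤ ∑ j, w j * x j := by
  obtain ⟨S, hS⟩ := exists_isBottomSet x hk
  rcases S.eq_empty_or_nonempty with rfl | hne
  · have hk0 : k = 0 := hS.1.symm.trans card_empty
    have hw_zero (j : n) : w j = 0 :=
      (sum_eq_zero_iff_of_nonneg fun j _ => hw0 j).1 (by rw [hw, hk0, Nat.cast_zero]) j
        (mem_univ j)
    simp [← hS.2, hw_zero]
  -- `x c` separates `S` from its complement, while `w - 𝟙_S` has total mass `0`,
  -- is `≤ 0` on `S` and `≥ 0` off `S`.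
  obtain ⟨c, hc, hmax⟩ := S.exists_max_image x hne
  have hin : ∑ j ∈ S, (x j - x c) ≤ ∑ j ∈ S, w j * (x j - x c) :=
    sum_le_sum fun j hj => by nlinarith [hmax j hj, hw1 j]
  have hout : 0 ≤ ∑ j ∈ Sᶜ, w j * (x j - x c) :=
    sum_nonneg fun j hj => mul_nonneg (hw0 j)
      (sub_nonneg.2 (hS.le_of_mem_of_notMem hc (mem_compl.1 hj)))
  have hfull : ∑ j, w j * (x j - x c) = ∑ j, w j * x j - k * x c := by
    simp only [mul_sub, sum_sub_distrib, ← sum_mul, hw]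
  have hbottom : ∑ j ∈ S, (x j - x c) = bottomSum x k - k * x c := by
    simp only [sum_sub_distrib, sum_const, hS.1, hS.2, nsmul_eq_mul]
  linarith [sum_add_sum_compl S fun j => w j * (x j - x c)]

theorem bottomSum_le_mul_sum (x : n → ℝ) (hk : k ≤ Fintype.card n) :
    bottomSum x k ≤ k / Fintype.card n * ∑ i, x i := by
  rcases (Nat.zero_le (Fintype.card n)).eq_or_lt with hN | hN
  · obtain rfl : k = 0 := by omega
    simp [← (isBottomSet_empty x).2]
  refine (bottomSum_le_sum_mul hk (fun _ => by positivity) (fun _ => ?_) ?_).trans_eq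
    (mul_sum _ _ _).symm
  · exact div_le_one_of_le₀ (by exact_mod_cast hk) (Nat.cast_nonneg _)
  · rw [sum_const, card_univ, nsmul_eq_mul, mul_div_cancel₀ _ (by positivity)]

theorem bottomSum_le_bottomSum_mulVec {A : Matrix n n ℝ} (hA : A ∈ doublyStochastic ℝ n)
    (x : n → ℝ) (hk : k ≤ Fintype.card n) : bottomSum x k ≤ bottomSum (A *ᵥ x) k := by
  obtain ⟨S, hS⟩ := exists_isBottomSet (A *ᵥ x) hk
  have hcols : ∑ i ∈ S, (A *ᵥ x) i = ∑ j, (∑ i ∈ S, A i j) * x j := by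
    simp only [Matrix.mulVec, dotProduct, sum_mul]
    exact sum_comm
  rw [← hS.2, hcols]
  refine bottomSum_le_sum_mul hk
    (fun j => sum_nonneg fun i _ => nonneg_of_mem_doublyStochastic hA) (fun j => ?_) ?_
  · calc ∑ i ∈ S, A i j ≤ ∑ i, A i j :=
          sum_le_sum_of_subset_of_nonneg (subset_univ _) fun i _ _ =>
            nonneg_of_mem_doublyStochastic hA
      _ = 1 := sum_col_of_mem_doublyStochastic hA j
  · rw [sum_comm]
    simp [sum_row_of_mem_doublyStochastic hA, hS.1]

end BottomSum

section Dissipation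

theorem sum_sum_mul_mul_sub_sq {ι : Type*} (s : Finset ι) (p f : ι → ℝ) :
    ∑ j ∈ s, ∑ k ∈ s, p j * p k * (f j - f k) ^ 2 =
      2 * ((∑ j ∈ s, p j) * ∑ j ∈ s, p j * f j ^ 2 - (∑ j ∈ s, p j * f j) ^ 2) := by
  have h (j k : ι) : p j * p k * (f j - f k) ^ 2 =
      p j * (p k * f k ^ 2) + p k * (p j * f j ^ 2) - 2 * (p j * f j) * (p k * f k) := by
    ring
  simp only [h, sum_sub_distrib, sum_add_distrib, ← mul_sum, ← sum_mul]
  ring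

variable {n : Type*} [Fintype n]

theorem mul_sum_mul_sub_sq_le {p : n → ℝ} (hp0 : ∀ j, 0 ≤ p j) (hp1 : ∑ j, p j = 1)
    (f : n → ℝ) (i : n) :
    p i * ∑ j, p j * (f i - f j) ^ 2 ≤ 2 * (∑ j, p j * f j ^ 2 - (∑ j, p j * f j) ^ 2) := by
  rw [← one_mul (∑ j, p j * f j ^ 2), ← hp1, ← sum_sum_mul_mul_sub_sq, mul_sum]
  exact (sum_congr rfl fun j _ => by ring).trans_le
    (single_le_sum (f := fun j => ∑ k, p j * p k * (f j - f k) ^ 2)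
      (fun j _ => sum_nonneg fun k _ => by have := hp0 j; have := hp0 k; positivity)
      (mem_univ i))

theorem sq_sum_mul_sub_le {p : n → ℝ} (hp0 : ∀ j, 0 ≤ p j) (hp1 : ∑ j, p j = 1)
    (f : n → ℝ) (c : ℝ) : (∑ j, p j * f j - c) ^ 2 ≤ ∑ j, p j * (c - f j) ^ 2 := by
  have hmean : ∑ j, p j * f j - c = ∑ j, p j * (f j - c) := by
    simp only [mul_sub, sum_sub_distrib, ← sum_mul, hp1, one_mul]
  rw [hmean, ← one_mul (∑ j, p j * (c - f j) ^ 2), ← hp1]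
  exact sum_sq_le_sum_mul_sum_of_sq_le_mul _ (fun j _ => hp0 j)
    (fun j _ => mul_nonneg (hp0 j) (sq_nonneg _)) fun j _ => by nlinarith [hp0 j]

noncomputable def dissipation (A : Matrix n n ℝ) (x : n → ℝ) : ℝ :=
  ∑ i, ∑ j, A i j * (x i - x j) ^ 2

variable {A : Matrix n n ℝ}

theorem sum_mul_sub_sq_le_dissipation (hA : ∀ i j, 0 ≤ A i j) (x : n → ℝ) (i : n) :
    ∑ j, A i j * (x i - x j) ^ 2 ≤ dissipation A x :=
  single_le_sum (f := fun i => ∑ j, A i j * (x i - x j) ^ 2)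
    (fun i _ => sum_nonneg fun j _ => mul_nonneg (hA i j) (sq_nonneg _)) (mem_univ i)

theorem mul_sub_sq_le_dissipation (hA : ∀ i j, 0 ≤ A i j) (x : n → ℝ) (i j : n) :
    A i j * (x i - x j) ^ 2 ≤ dissipation A x :=
  (single_le_sum (f := fun j => A i j * (x i - x j) ^ 2)
    (fun j _ => mul_nonneg (hA i j) (sq_nonneg _)) (mem_univ j)).trans
    (sum_mul_sub_sq_le_dissipation hA x i)

theorem dissipation_nonneg (hA : ∀ i j, 0 ≤ A i j) (x : n → ℝ) : 0 ≤ dissipation A x :=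
  sum_nonneg fun i _ => sum_nonneg fun j _ => mul_nonneg (hA i j) (sq_nonneg _)

variable [DecidableEq n]

theorem sq_mulVec_sub_le_dissipation (hA : A ∈ Matrix.rowStochastic ℝ n) (x : n → ℝ) (i : n) :
    ((A *ᵥ x) i - x i) ^ 2 ≤ dissipation A x :=
  (sq_sum_mul_sub_le (fun _ => Matrix.nonneg_of_mem_rowStochastic hA)
    (Matrix.sum_row_of_mem_rowStochastic hA i) x (x i)).trans
    (sum_mul_sub_sq_le_dissipation (A := A) (fun _ _ => Matrix.nonneg_of_mem_rowStochastic hA) x i)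

theorem mul_dissipation_le (hA : A ∈ doublyStochastic ℝ n) {δ : ℝ} (hdiag : ∀ i, δ ≤ A i i)
    (x : n → ℝ) : δ * dissipation A x ≤ 2 * (∑ i, x i ^ 2 - ∑ i, (A *ᵥ x) i ^ 2) := by
  have hrow (i : n) : δ * ∑ j, A i j * (x i - x j) ^ 2 ≤
      2 * (∑ j, A i j * x j ^ 2 - (∑ j, A i j * x j) ^ 2) :=
    (mul_le_mul_of_nonneg_right (hdiag i)
      (sum_nonneg fun j _ => mul_nonneg (nonneg_of_mem_doublyStochastic hA) (sq_nonneg _))).trans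
      (mul_sum_mul_sub_sq_le (fun _ => nonneg_of_mem_doublyStochastic hA)
        (sum_row_of_mem_doublyStochastic hA i) x i)
  have hsq : ∑ i, (A *ᵥ fun j => x j ^ 2) i = ∑ i, x i ^ 2 :=
    sum_mulVec_of_mem_doublyStochastic hA
  rw [dissipation, mul_sum, ← hsq]
  refine (sum_le_sum fun i _ => hrow i).trans_eq ?_
  rw [← mul_sum, sum_sub_distrib]
  rfl

end Dissipation

section Chain

variable {n : Type*} [Fintype n] [DecidableEq n] {A : ℕ → Matrix n n ℝ} {x : ℕ → n → ℝ}

theorem summable_dissipation (hA : ∀ t, A t ∈ doublyStochastic ℝ n)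
    (hx : ∀ t, x (t + 1) = A t *ᵥ x t) {δ : ℝ} (hδ : 0 < δ) (hdiag : ∀ t i, δ ≤ A t i i) :
    Summable fun t => dissipation (A t) (x t) := by
  refine summable_of_sum_range_le (c := 2 * (∑ i, x 0 i ^ 2) / δ)
    (fun t => dissipation_nonneg (fun _ _ => nonneg_of_mem_doublyStochastic (hA t)) _)
    fun T => ?_
  rw [le_div_iff₀ hδ]
  calc (∑ t ∈ range T, dissipation (A t) (x t)) * δ
      = ∑ t ∈ range T, δ * dissipation (A t) (x t) := by
        rw [sum_mul]
        simp only [mul_comm]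
    _ ≤ ∑ t ∈ range T, 2 * (∑ i, x t i ^ 2 - ∑ i, x (t + 1) i ^ 2) :=
        sum_le_sum fun t _ => by rw [hx t]; exact mul_dissipation_le (hA t) (hdiag t) (x t)
    _ = 2 * (∑ i, x 0 i ^ 2 - ∑ i, x T i ^ 2) := by
        rw [← mul_sum, sum_range_sub' (fun t => ∑ i, x t i ^ 2)]
    _ ≤ 2 * ∑ i, x 0 i ^ 2 := by
        nlinarith [sum_nonneg fun i (_ : i ∈ univ) => sq_nonneg (x T i)]

theorem tendsto_succ_sub_nhds_zero (hA : ∀ t, A t ∈ Matrix.rowStochastic ℝ n)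
    (hx : ∀ t, x (t + 1) = A t *ᵥ x t) (hQ : Summable fun t => dissipation (A t) (x t))
    (i : n) : Tendsto (fun t => x (t + 1) i - x t i) atTop (𝓝 0) :=
  squeeze_zero_norm
    (fun t => Real.abs_le_sqrt (hx t ▸ sq_mulVec_sub_le_dissipation (hA t) (x t) i))
    (by simpa using hQ.tendsto_atTop_zero.sqrt)

theorem exists_tendsto_sortedEntry (hA : ∀ t, A t ∈ doublyStochastic ℝ n)
    (hx : ∀ t, x (t + 1) = A t *ᵥ x t) :
    ∃ l : ℕ → ℝ, ∀ k ≤ Fintype.card n,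
      Tendsto (fun t => sortedEntry (x t) k) atTop (𝓝 (l k)) := by
  have hsum (t : ℕ) : ∑ i, x t i = ∑ i, x 0 i := by
    induction t with
    | zero => rfl
    | succ t ih => rw [hx t, sum_mulVec_of_mem_doublyStochastic (hA t), ih]
  have hconv (k : ℕ) (hk : k ≤ Fintype.card n) :
      Tendsto (fun t => bottomSum (x t) k) atTop (𝓝 (⨆ t, bottomSum (x t) k)) := by
    refine tendsto_atTop_ciSup (monotone_nat_of_le_succ fun t => ?_)
      ⟨k / Fintype.card n * ∑ i, x 0 i, ?_⟩
    · rw [hx t]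
      exact bottomSum_le_bottomSum_mulVec (hA t) _ hk
    · rintro _ ⟨t, rfl⟩
      simpa only [hsum] using bottomSum_le_mul_sum (x t) hk
  exact ⟨fun k => (⨆ t, bottomSum (x t) k) - ⨆ t, bottomSum (x t) (k - 1),
    fun k hk => (hconv k hk).sub (hconv (k - 1) (by omega))⟩

end Chain

theorem tsum_ofReal_ne_top_of_summable_mul_sq {w d : ℕ → ℝ} {r : ℝ} (hr : 0 < r)
    (hw : ∀ t, 0 ≤ w t) (hd : ∀ᶠ t in atTop, r ≤ |d t|)
    (hs : Summable fun t => w t * d t ^ 2) : ∑' t, ENNReal.ofReal (w t) ≠ ⊤ := by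
  have hsw : Summable w := by
    refine (hs.div_const (r ^ 2)).of_norm_bounded_eventually_nat (hd.mono fun t ht => ?_)
    rw [Real.norm_of_nonneg (hw t), le_div_iff₀ (by positivity), ← sq_abs (d t)]
    exact mul_le_mul_of_nonneg_left (pow_le_pow_left₀ hr.le ht 2) (hw t)
  rw [← ENNReal.ofReal_tsum_of_nonneg hw hsw]
  exact ENNReal.ofReal_ne_top

theorem tendsto_sub_of_squeeze {f g u v : ℕ → ℝ} {a b : ℝ} (hu : Tendsto u atTop (𝓝 a))
    (hv : Tendsto v atTop (𝓝 b)) (hba : b ≤ a) (hf : ∀ᶠ t in atTop, u t ≤ f t ∧ f t ≤ v t)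
    (hg : ∀ᶠ t in atTop, u t ≤ g t ∧ g t ≤ v t) :
    Tendsto (fun t => f t - g t) atTop (𝓝 0) := by
  have hwidth : Tendsto (fun t => max (v t - u t) 0) atTop (𝓝 0) := by
    have := (hv.sub hu).max (tendsto_const_nhds (x := 0))
    rwa [max_eq_right (sub_nonpos.2 hba)] at this
  refine squeeze_zero_norm' ?_ hwidth
  filter_upwards [hf, hg] with t hf hg
  rw [Real.norm_eq_abs, abs_le]
  constructor <;> linarith [le_max_left (v t - u t) 0]

theorem tendsto_sub_of_reachable {n : Type*} {G : SimpleGraph n} {x : ℕ → n → ℝ}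
    (hadj : ∀ a b, G.Adj a b → Tendsto (fun t => x t a - x t b) atTop (𝓝 0)) {i j : n}
    (h : G.Reachable i j) : Tendsto (fun t => x t i - x t j) atTop (𝓝 0) := by
  rw [SimpleGraph.reachable_iff_reflTransGen] at h
  induction h with
  | refl => simp
  | tail _ hbc ih => simpa using ih.add (hadj _ _ hbc)

theorem lt_iff_lt_of_abs_sub_lt {s u θ ε : ℝ} (hs : s ≤ θ - ε ∨ θ + ε ≤ s)
    (hu : u ≤ θ - ε ∨ θ + ε ≤ u) (h : |u - s| < 2 * ε) : u < θ ↔ s < θ := by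
  have := abs_lt.1 h
  rcases hs with hs | hs <;> rcases hu with hu | hu <;> constructor <;> intro <;> linarith

theorem le_abs_sub_of_lt_iff_not_lt {s u θ ε : ℝ} (hε : 0 < ε) (hs : s ≤ θ - ε ∨ θ + ε ≤ s)
    (hu : u ≤ θ - ε ∨ θ + ε ≤ u) (h : s < θ ↔ ¬u < θ) : 2 * ε ≤ |s - u| := by
  rcases hs with hs | hs <;> rcases hu with hu | hu
  · exact absurd (show u < θ by linarith) (h.1 (by linarith))
  · exact le_abs.2 (Or.inr (by linarith))
  · exact le_abs.2 (Or.inl (by linarith))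
  · exact absurd (h.2 (not_lt.2 (by linarith))) (not_lt.2 (by linarith))

section Gaps

variable {n : Type*} [Fintype n] [DecidableEq n] {x : ℕ → n → ℝ} {l : ℕ → ℝ}

theorem exists_separated_isBottomSet_of_gap
    (hl : ∀ k ≤ Fintype.card n, Tendsto (fun t => sortedEntry (x t) k) atTop (𝓝 (l k)))
    (hstep : ∀ i, Tendsto (fun t => x (t + 1) i - x t i) atTop (𝓝 0))
    {k : ℕ} (hk : k < Fintype.card n) (hgap : l k < l (k + 1)) :
    ∃ S, ∃ r > 0, (∀ᶠ t in atTop, IsBottomSet (x t) k S) ∧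
      ∀ a b, (a ∈ S ↔ b ∉ S) → ∀ᶠ t in atTop, r ≤ |x t a - x t b| := by
  set θ := (l k + l (k + 1)) / 2 with hθ
  set ε := (l (k + 1) - l k) / 4 with hε_def
  set P : ℕ → Finset n := fun t => univ.filter fun a => x t a < θ with hP
  have hε : 0 < ε := by linarith
  have hlo : ∀ᶠ t in atTop, sortedEntry (x t) k ≤ θ - ε :=
    (hl k hk.le).eventually_le_const (by linarith)
  have hhi : ∀ᶠ t in atTop, θ + ε ≤ sortedEntry (x t) (k + 1) :=
    (hl (k + 1) hk).eventually_const_le (by linarith)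
  have hbottom : ∀ᶠ t in atTop, IsBottomSet (x t) k (P t) := by
    filter_upwards [hlo, hhi] with t hlo hhi
    exact isBottomSet_filter_lt hk.le (by linarith) (by linarith)
  have hband : ∀ᶠ t in atTop, ∀ a, x t a ≤ θ - ε ∨ θ + ε ≤ x t a := by
    filter_upwards [hbottom, hlo, hhi] with t hbot hlo hhi a
    by_cases ha : x t a < θ
    · exact Or.inl ((hbot.le_sortedEntry ((mem_filter_univ a).2 ha)).trans hlo)
    · exact Or.inr (hhi.trans (hbot.sortedEntry_succ_le fun h => ha ((mem_filter_univ a).1 h)))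
  have hsmall : ∀ᶠ t in atTop, ∀ a, |x (t + 1) a - x t a| < 2 * ε :=
    eventually_all.2 fun a =>
      (hstep a).abs.eventually_lt_const (by rw [abs_zero]; positivity)
  have hstable : ∀ᶠ t in atTop, P (t + 1) = P t := by
    filter_upwards [hband, (tendsto_add_atTop_nat 1).eventually hband, hsmall] with t h0 h1 hs
    ext a
    simpa only [hP, mem_filter_univ] using lt_iff_lt_of_abs_sub_lt (h0 a) (h1 a) (hs a)
  obtain ⟨S, hS⟩ := (eventuallyConst_atTop_nat.2 (eventually_atTop.1 hstable)).eventuallyEq_const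
  refine ⟨S, 2 * ε, by positivity, ?_, fun a b hab => ?_⟩
  · filter_upwards [hbottom, hS] with t hbot hPS
    rwa [hPS] at hbot
  · filter_upwards [hband, hS] with t hb hPS
    rw [← hPS] at hab
    simp only [hP, mem_filter_univ] at hab
    exact le_abs_sub_of_lt_iff_not_lt hε (hb a) (hb b) hab

theorem tendsto_sub_of_forall_gap
    (hl : ∀ k ≤ Fintype.card n, Tendsto (fun t => sortedEntry (x t) k) atTop (𝓝 (l k)))
    {i j : n} (hcut : ∀ k < Fintype.card n, l k < l (k + 1) →
      ∃ S, (∀ᶠ t in atTop, IsBottomSet (x t) k S) ∧ (i ∈ S ↔ j ∈ S)) :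
    Tendsto (fun t => x t i - x t j) atTop (𝓝 0) := by
  classical
  let Below (k : ℕ) : Prop := ∃ S, (∀ᶠ t in atTop, IsBottomSet (x t) k S) ∧ i ∈ S ∧ j ∈ S
  let Above (k : ℕ) : Prop := ∃ S, (∀ᶠ t in atTop, IsBottomSet (x t) k S) ∧ i ∉ S ∧ j ∉ S
  have hBelow_univ : Below (Fintype.card n) :=
    ⟨univ, .of_forall fun t => isBottomSet_univ _, mem_univ i, mem_univ j⟩
  have hAbove_empty : Above 0 :=
    ⟨∅, .of_forall fun t => isBottomSet_empty _, notMem_empty i, notMem_empty j⟩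
  have hBelow : ∃ k, Below k := ⟨_, hBelow_univ⟩
  set k₂ := Nat.find hBelow
  set k₁ := Nat.findGreatest Above (k₂ - 1)
  obtain ⟨S₂, hS₂, hi₂, hj₂⟩ : Below k₂ := Nat.find_spec hBelow
  obtain ⟨S₁, hS₁, hi₁, hj₁⟩ : Above k₁ := Nat.findGreatest_spec (Nat.zero_le _) hAbove_empty
  have hk₂ : k₂ ≤ Fintype.card n := Nat.find_min' hBelow hBelow_univ
  have hk₂_pos : 0 < k₂ := by
    obtain ⟨t, ht⟩ := hS₂.exists
    exact ht.1 ▸ card_pos.2 ⟨i, hi₂⟩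
  have hk₁ : k₁ < k₂ := (Nat.findGreatest_le _).trans_lt (by omega)
  -- a gap strictly between `k₁` and `k₂` would contradict the choice of `k₁` or of `k₂`
  have hflat (k : ℕ) (hk₁k : k₁ < k) (hkk₂ : k < k₂) : l (k + 1) ≤ l k := by
    refine not_lt.1 fun hlt => ?_
    obtain ⟨S, hS, hij⟩ := hcut k (by omega) hlt
    by_cases hi : i ∈ S
    · exact Nat.find_min hBelow hkk₂ ⟨S, hS, hi, hij.1 hi⟩
    · exact Nat.findGreatest_is_greatest hk₁k (by omega) ⟨S, hS, hi, mt hij.2 hi⟩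
  have hle (k : ℕ) (hk : k₁ + 1 ≤ k) : k ≤ k₂ → l k ≤ l (k₁ + 1) := by
    induction k, hk using Nat.le_induction with
    | base => exact fun _ => le_rfl
    | succ k hk ih => exact fun hkk₂ => (hflat k (by omega) (by omega)).trans (ih (by omega))
  refine tendsto_sub_of_squeeze (hl (k₁ + 1) (by omega)) (hl k₂ hk₂) (hle k₂ hk₁ le_rfl) ?_ ?_
  · filter_upwards [hS₁, hS₂] with t h₁ h₂
    exact ⟨h₁.sortedEntry_succ_le hi₁, h₂.le_sortedEntry hi₂⟩
  · filter_upwards [hS₁, hS₂] with t h₁ h₂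
    exact ⟨h₁.sortedEntry_succ_le hj₁, h₂.le_sortedEntry hj₂⟩

end Gaps

theorem stmt1_general (m : ℕ) (δ : ℝ) (hδ : 0 < δ)
    (A : ℕ → Matrix (Fin m) (Fin m) ℝ)
    (hnonneg : ∀ t i j, 0 ≤ A t i j)
    (hrow : ∀ t i, ∑ j, A t i j = 1)
    (hcol : ∀ t j, ∑ i, A t i j = 1)
    (hdiag : ∀ t i, δ ≤ A t i i)
    (x : ℕ → Fin m → ℝ)
    (hx : ∀ t, x (t + 1) = (A t).mulVec (x t))
    -- the infinite flow graph: {i₁,i₂} is an edge iff Σ_t A_{i₁i₂}(t) = ∞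
    (G : SimpleGraph (Fin m))
    (hG : G = SimpleGraph.fromRel
      (fun i₁ i₂ => (∑' t : ℕ, ENNReal.ofReal (A t i₁ i₂)) = ⊤)) :
    ∀ i₁ i₂ : Fin m, G.Reachable i₁ i₂ →
      Tendsto (fun t => x t i₁ - x t i₂) atTop (𝓝 0) := by
  subst hG
  have hA t : A t ∈ doublyStochastic ℝ (Fin m) :=
    mem_doublyStochastic_iff_sum.2 ⟨hnonneg t, hrow t, hcol t⟩
  have hQ := summable_dissipation hA hx hδ hdiag
  have hstep := tendsto_succ_sub_nhds_zero
    (fun t => Matrix.mem_rowStochastic_iff_sum.2 ⟨hnonneg t, hrow t⟩) hx hQ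
  obtain ⟨l, hl⟩ := exists_tendsto_sortedEntry hA hx
  have hinfinite a b (hab : (∑' t, ENNReal.ofReal (A t a b)) = ⊤) :
      Tendsto (fun t => x t a - x t b) atTop (𝓝 0) := by
    refine tendsto_sub_of_forall_gap hl fun k hk hgap => ?_
    obtain ⟨S, r, hr, hS, hsep⟩ := exists_separated_isBottomSet_of_gap hl hstep hk hgap
    refine ⟨S, hS, not_not.1 fun hside => ?_⟩
    have hflow : Summable fun t => A t a b * (x t a - x t b) ^ 2 :=
      hQ.of_nonneg_of_le (fun t => mul_nonneg (hnonneg t a b) (sq_nonneg _))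
        fun t => mul_sub_sq_le_dissipation (hnonneg t) (x t) a b
    exact tsum_ofReal_ne_top_of_summable_mul_sq hr (hnonneg · a b) (hsep a b (by tauto)) hflow hab
  refine fun i₁ i₂ => tendsto_sub_of_reachable fun a b hab => ?_
  rcases (SimpleGraph.fromRel_adj _ a b).1 hab with ⟨-, h | h⟩
  · exact hinfinite a b h
  · simpa using (hinfinite b a h).neg

/-- For the backward-product dynamics driven by doubly stochastic
matrices with diagonal entries bounded below by δ > 0, any two agents lying in
the same connected component of the infinite flow graph asymptotically agree. -/
theorem stmt1 (m : ℕ) (hm : 2 ≤ m) (δ : ℝ) (hδ : 0 < δ)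
    (A : ℕ → Matrix (Fin m) (Fin m) ℝ)
    (hnonneg : ∀ t i j, 0 ≤ A t i j)
    (hrow : ∀ t i, ∑ j, A t i j = 1)
    (hcol : ∀ t j, ∑ i, A t i j = 1)
    (hdiag : ∀ t i, δ ≤ A t i i)
    (x : ℕ → Fin m → ℝ)
    (hx : ∀ t, x (t + 1) = (A t).mulVec (x t))
    -- the infinite flow graph: {i₁,i₂} is an edge iff Σ_t A_{i₁i₂}(t) = ∞
    (G : SimpleGraph (Fin m))
    (hG : G = SimpleGraph.fromRel
      (fun i₁ i₂ => (∑' t : ℕ, ENNReal.ofReal (A t i₁ i₂)) = ⊤)) :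
    ∀ i₁ i₂ : Fin m, G.Reachable i₁ i₂ →
      Tendsto (fun t => x t i₁ - x t i₂) atTop (𝓝 0) :=
  stmt1_general m δ hδ A hnonneg hrow hcol hdiag x hx G hG
end

section
/- Consider a voting diffusion trajectory with m ≥ 2 agents and n ≥ 1 candidates, determined by arbitrary sequences of communicating pairs {i₁(t), i₂(t)} of distinct agents, subject sets S(t) ⊆ [n], and an initial profile X(0) ∈ ℝ^{m×n}. Then the dynamics converges: the limit lim_{t→∞} X(t) exists (entrywise). -/
open Filter Topology

open Filter Topology Finset

namespace Gossip

variable {m : ℕ}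

/-- One step of the dynamics: either nothing happens, or two agents average. -/
def StepRel (u w : Fin m → ℝ) : Prop :=
  w = u ∨ ∃ p q : Fin m, p ≠ q ∧
    ∀ i, w i = if i = p ∨ i = q then (u p + u q) / 2 else u i

/-- Comparison of sums over equal-cardinality sets when every element of `A`
dominates every element of `B`. -/
lemma sum_compare {ι : Type*} (g : ι → ℝ) (A B : Finset ι) (hcard : A.card = B.card)
    (h : ∀ a ∈ A, ∀ b ∈ B, g b ≤ g a) : ∑ b ∈ B, g b ≤ ∑ a ∈ A, g a := by
  rcases B.eq_empty_or_nonempty with hB | hB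
  · rw [hB, Finset.sum_empty]
    rw [hB, Finset.card_empty, Finset.card_eq_zero] at hcard
    rw [hcard, Finset.sum_empty]
  · obtain ⟨b₀, hb₀, hMb⟩ := Finset.exists_mem_eq_sup' hB g
    have h1 : ∑ b ∈ B, g b ≤ B.card • g b₀ :=
      Finset.sum_le_card_nsmul _ _ _ (fun b hb => hMb ▸ Finset.le_sup' g hb)
    have h2 : A.card • g b₀ ≤ ∑ a ∈ A, g a :=
      Finset.card_nsmul_le_sum _ _ _ (fun a ha => h a ha b₀ hb₀)
    rw [hcard] at h2
    linarith

/-- Minimum of `k`-subset sums of the values at time `t`. -/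
noncomputable def Ak (v : ℕ → Fin m → ℝ) (k t : ℕ) : ℝ :=
  if h : ((univ : Finset (Fin m)).powersetCard k).Nonempty
  then ((univ : Finset (Fin m)).powersetCard k).inf' h (fun s => ∑ i ∈ s, v t i)
  else 0

lemma Ak_le (v : ℕ → Fin m → ℝ) (t : ℕ) {k : ℕ} {s : Finset (Fin m)}
    (hs : s ∈ (univ : Finset (Fin m)).powersetCard k) :
    Ak v k t ≤ ∑ i ∈ s, v t i := by
  rw [Ak, dif_pos ⟨s, hs⟩]
  exact Finset.inf'_le _ hs

/-- If `C` is a "lower set" for the values at time `t`, then the minimum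
`|C|`-subset sum is exactly the sum over `C`. -/
lemma Ak_eq_of_lower (v : ℕ → Fin m → ℝ) (t : ℕ) (C : Finset (Fin m))
    (hC : ∀ b ∈ C, ∀ a : Fin m, a ∉ C → v t b ≤ v t a) :
    Ak v C.card t = ∑ i ∈ C, v t i := by
  classical
  have hmem : C ∈ (univ : Finset (Fin m)).powersetCard C.card := by
    simp [Finset.mem_powersetCard]
  refine le_antisymm (Ak_le v t hmem) ?_
  rw [Ak, dif_pos ⟨C, hmem⟩]
  apply Finset.le_inf'
  intro s hs
  rw [Finset.mem_powersetCard] at hs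
  have hcard : (s \ C).card = (C \ s).card := by
    have h1 := Finset.card_sdiff_add_card_inter s C
    have h2 := Finset.card_sdiff_add_card_inter C s
    rw [Finset.inter_comm] at h2
    omega
  have hcmp : ∑ b ∈ C \ s, v t b ≤ ∑ a ∈ s \ C, v t a := by
    apply sum_compare (v t) _ _ hcard
    intro a ha b hb
    exact hC b (Finset.mem_sdiff.mp hb).1 a (Finset.mem_sdiff.mp ha).2
  have e1 := Finset.sum_inter_add_sum_sdiff C s (v t)
  have e2 := Finset.sum_inter_add_sum_sdiff s C (v t)
  rw [Finset.inter_comm s C] at e2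
  linarith

/-- Every value at time `t` is a difference of consecutive minimal subset sums. -/
lemma rep (v : ℕ → Fin m → ℝ) (t : ℕ) (i : Fin m) :
    ∃ k, k < m ∧ v t i = Ak v (k + 1) t - Ak v k t := by
  classical
  set u := v t with hu
  set B : Finset (Fin m) :=
    univ.filter (fun j => u j < u i ∨ (u j = u i ∧ j < i)) with hB
  have hiB : i ∉ B := by simp [hB]
  refine ⟨B.card, ?_, ?_⟩
  · have hsub : B ⊆ univ.erase i := fun j hj =>
      Finset.mem_erase.mpr ⟨by rintro rfl; exact hiB hj, Finset.mem_univ j⟩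
    have := Finset.card_le_card hsub
    have h2 : (univ.erase i).card = m - 1 := by
      rw [Finset.card_erase_of_mem (Finset.mem_univ i)]
      simp
    have hm : 0 < m := i.pos
    omega
  · have hCB : ∀ b ∈ B, ∀ a : Fin m, a ∉ B → u b ≤ u a := by
      intro b hb a ha
      rw [hB, Finset.mem_filter] at hb ha
      push_neg at ha
      have h1 : u b ≤ u i := by
        rcases hb.2 with h | h
        · exact h.le
        · exact h.1.le
      have h2 : u i ≤ u a := (ha (Finset.mem_univ a)).1
      linarith
    have hCB' : ∀ b ∈ insert i B, ∀ a : Fin m, a ∉ insert i B → u b ≤ u a := by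
      intro b hb a ha
      have hai : a ∉ B := fun h => ha (Finset.mem_insert_of_mem h)
      have h2 : u i ≤ u a := by
        rw [hB, Finset.mem_filter] at hai
        push_neg at hai
        exact (hai (Finset.mem_univ a)).1
      rcases Finset.mem_insert.mp hb with rfl | hbB
      · exact h2
      · exact le_trans (by
          rw [hB, Finset.mem_filter] at hbB
          rcases hbB.2 with h | h
          · exact h.le
          · exact h.1.le) h2
    have h1 : Ak v B.card t = ∑ j ∈ B, u j := Ak_eq_of_lower v t B hCB
    have h2 : Ak v (B.card + 1) t = ∑ j ∈ insert i B, u j := by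
      have hcard : (insert i B).card = B.card + 1 := Finset.card_insert_of_notMem hiB
      rw [← hcard]
      exact Ak_eq_of_lower v t _ hCB'
    rw [h1, h2, Finset.sum_insert hiB]
    ring



/-- The minimal `k`-subset sum is nondecreasing along the dynamics. -/
lemma Ak_mono (v : ℕ → Fin m → ℝ) (hv : ∀ t, StepRel (v t) (v (t + 1))) (k : ℕ) :
    Monotone (fun t => Ak v k t) := by
  classical
  apply monotone_nat_of_le_succ
  intro t
  by_cases hne : ((univ : Finset (Fin m)).powersetCard k).Nonempty
  · show Ak v k t ≤ Ak v k (t + 1)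
    conv_rhs => rw [Ak, dif_pos hne]
    apply Finset.le_inf'
    intro s hs
    rcases hv t with heq | ⟨p, q, hpq, havg⟩
    · have hcg : ∀ j ∈ s, v (t + 1) j = v t j := fun j _ => by rw [heq]
      rw [Finset.sum_congr rfl hcg]
      exact Ak_le v t hs
    · have hd : ∀ j, j ≠ p → j ≠ q → v (t + 1) j = v t j := by
        intro j h1 h2
        rw [havg j, if_neg (by tauto)]
      have key : ∑ j ∈ s, v (t + 1) j
          = ∑ j ∈ s, v t j + ∑ j ∈ s ∩ {p, q}, (v (t + 1) j - v t j) := by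
        have hsub : ∑ j ∈ s ∩ {p, q}, (v (t + 1) j - v t j)
            = ∑ j ∈ s, (v (t + 1) j - v t j) := by
          apply Finset.sum_subset Finset.inter_subset_left
          intro x hx hnx
          have hxpq : x ∉ ({p, q} : Finset (Fin m)) := by
            intro hmem; exact hnx (Finset.mem_inter.mpr ⟨hx, hmem⟩)
          simp only [Finset.mem_insert, Finset.mem_singleton] at hxpq
          push_neg at hxpq
          rw [hd x hxpq.1 hxpq.2]
          ring
        rw [hsub, Finset.sum_sub_distrib]
        ring
      by_cases hp : p ∈ s <;> by_cases hq : q ∈ s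
      · -- both in s : sum unchanged
        have hint : s ∩ {p, q} = {p, q} := by
          apply Finset.inter_eq_right.mpr
          intro x hx
          simp only [Finset.mem_insert, Finset.mem_singleton] at hx
          rcases hx with rfl | rfl <;> assumption
        calc Ak v k t ≤ ∑ i ∈ s, v t i := Ak_le v t hs
          _ = ∑ j ∈ s, v (t + 1) j := by
            rw [key, hint, Finset.sum_pair hpq, havg p, havg q,
              if_pos (Or.inl rfl), if_pos (Or.inr rfl)]
            ring
      · -- only p in s
        have hint : s ∩ {p, q} = {p} := by
          ext x
          simp only [Finset.mem_inter, Finset.mem_insert, Finset.mem_singleton]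
          constructor
          · rintro ⟨hxs, rfl | rfl⟩
            · rfl
            · exact absurd hxs hq
          · rintro rfl; exact ⟨hp, Or.inl rfl⟩
        have hcor : ∑ j ∈ s, v (t + 1) j = ∑ j ∈ s, v t j + (v t q - v t p) / 2 := by
          rw [key, hint, Finset.sum_singleton, havg p, if_pos (Or.inl rfl)]
          ring
        by_cases hab : v t p ≤ v t q
        · calc Ak v k t ≤ ∑ i ∈ s, v t i := Ak_le v t hs
            _ ≤ ∑ j ∈ s, v (t + 1) j := by rw [hcor]; linarith
        · push_neg at hab
          have hqe : q ∉ s.erase p := fun h => hq (Finset.mem_of_mem_erase h)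
          have hcard : (insert q (s.erase p)).card = k := by
            rw [Finset.card_insert_of_notMem hqe, Finset.card_erase_of_mem hp]
            have hk : s.card = k := (Finset.mem_powersetCard.mp hs).2
            have : 0 < s.card := Finset.card_pos.mpr ⟨p, hp⟩
            omega
          have hmem : insert q (s.erase p) ∈ (univ : Finset (Fin m)).powersetCard k :=
            Finset.mem_powersetCard.mpr ⟨Finset.subset_univ _, hcard⟩
          have hsum' : ∑ i ∈ insert q (s.erase p), v t i
              = ∑ i ∈ s, v t i - v t p + v t q := by
            rw [Finset.sum_insert hqe]
            have := Finset.add_sum_erase s (v t) hp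
            linarith
          calc Ak v k t ≤ ∑ i ∈ insert q (s.erase p), v t i := Ak_le v t hmem
            _ = ∑ i ∈ s, v t i - v t p + v t q := hsum'
            _ ≤ ∑ i ∈ s, v t i + (v t q - v t p) / 2 := by linarith
            _ = ∑ j ∈ s, v (t + 1) j := hcor.symm
      · -- only q in s
        have hint : s ∩ {p, q} = {q} := by
          ext x
          simp only [Finset.mem_inter, Finset.mem_insert, Finset.mem_singleton]
          constructor
          · rintro ⟨hxs, rfl | rfl⟩
            · exact absurd hxs hp
            · rfl
          · rintro rfl; exact ⟨hq, Or.inr rfl⟩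
        have hcor : ∑ j ∈ s, v (t + 1) j = ∑ j ∈ s, v t j + (v t p - v t q) / 2 := by
          rw [key, hint, Finset.sum_singleton, havg q, if_pos (Or.inr rfl)]
          ring
        by_cases hab : v t q ≤ v t p
        · calc Ak v k t ≤ ∑ i ∈ s, v t i := Ak_le v t hs
            _ ≤ ∑ j ∈ s, v (t + 1) j := by rw [hcor]; linarith
        · push_neg at hab
          have hqe : p ∉ s.erase q := fun h => hp (Finset.mem_of_mem_erase h)
          have hcard : (insert p (s.erase q)).card = k := by
            rw [Finset.card_insert_of_notMem hqe, Finset.card_erase_of_mem hq]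
            have hk : s.card = k := (Finset.mem_powersetCard.mp hs).2
            have : 0 < s.card := Finset.card_pos.mpr ⟨q, hq⟩
            omega
          have hmem : insert p (s.erase q) ∈ (univ : Finset (Fin m)).powersetCard k :=
            Finset.mem_powersetCard.mpr ⟨Finset.subset_univ _, hcard⟩
          have hsum' : ∑ i ∈ insert p (s.erase q), v t i
              = ∑ i ∈ s, v t i - v t q + v t p := by
            rw [Finset.sum_insert hqe]
            have := Finset.add_sum_erase s (v t) hq
            linarith
          calc Ak v k t ≤ ∑ i ∈ insert p (s.erase q), v t i := Ak_le v t hmem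
            _ = ∑ i ∈ s, v t i - v t q + v t p := hsum'
            _ ≤ ∑ i ∈ s, v t i + (v t p - v t q) / 2 := by linarith
            _ = ∑ j ∈ s, v (t + 1) j := hcor.symm
      · -- neither
        have hint : s ∩ {p, q} = ∅ := by
          ext x
          simp only [Finset.mem_inter, Finset.mem_insert, Finset.mem_singleton,
            Finset.notMem_empty, iff_false, not_and]
          rintro hxs (rfl | rfl)
          · exact hp hxs
          · exact hq hxs
        calc Ak v k t ≤ ∑ i ∈ s, v t i := Ak_le v t hs
          _ = ∑ j ∈ s, v (t + 1) j := by rw [key, hint]; simp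
  · show Ak v k t ≤ Ak v k (t + 1)
    rw [Ak, Ak, dif_neg hne, dif_neg hne]

/-- All values stay below the initial maximum. -/
lemma le_hi (hm : 0 < m) (v : ℕ → Fin m → ℝ) (hv : ∀ t, StepRel (v t) (v (t + 1))) :
    ∃ hi : ℝ, ∀ t i, v t i ≤ hi := by
  have hne : (univ : Finset (Fin m)).Nonempty := ⟨⟨0, hm⟩, Finset.mem_univ _⟩
  refine ⟨univ.sup' hne (v 0), ?_⟩
  intro t
  induction t with
  | zero => exact fun i => Finset.le_sup' _ (Finset.mem_univ i)
  | succ t ih =>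
    intro i
    rcases hv t with heq | ⟨p, q, hpq, havg⟩
    · rw [heq]; exact ih i
    · rw [havg i]
      split
      · have h1 := ih p
        have h2 := ih q
        linarith
      · exact ih i

/-- Lyapunov function: sum of squares. -/
noncomputable def V (v : ℕ → Fin m → ℝ) (t : ℕ) : ℝ := ∑ i, (v t i) ^ 2

lemma V_nonneg (v : ℕ → Fin m → ℝ) (t : ℕ) : 0 ≤ V v t :=
  Finset.sum_nonneg (fun i _ => sq_nonneg _)

/-- Exact decrease of `V` at an averaging step. -/
lemma V_avg (v : ℕ → Fin m → ℝ) (t : ℕ) (p q : Fin m) (hpq : p ≠ q)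
    (havg : ∀ i, v (t + 1) i = if i = p ∨ i = q then (v t p + v t q) / 2 else v t i) :
    V v t - V v (t + 1) = (v t p - v t q) ^ 2 / 2 := by
  classical
  have hd : ∀ j, j ≠ p → j ≠ q → v (t + 1) j = v t j := by
    intro j h1 h2
    rw [havg j, if_neg (by tauto)]
  have hsub : ∑ j ∈ ({p, q} : Finset (Fin m)), ((v (t + 1) j) ^ 2 - (v t j) ^ 2)
      = ∑ j, ((v (t + 1) j) ^ 2 - (v t j) ^ 2) := by
    apply Finset.sum_subset (Finset.subset_univ _)
    intro x _ hnx
    simp only [Finset.mem_insert, Finset.mem_singleton] at hnx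
    push_neg at hnx
    rw [hd x hnx.1 hnx.2]
    ring
  rw [Finset.sum_pair hpq, havg p, havg q, if_pos (Or.inl rfl), if_pos (Or.inr rfl)] at hsub
  have : V v (t + 1) - V v t = ∑ j, ((v (t + 1) j) ^ 2 - (v t j) ^ 2) := by
    rw [V, V, Finset.sum_sub_distrib]
  rw [← hsub] at this
  rw [show V v t - V v (t+1) = -(V v (t+1) - V v t) by ring, this]
  ring

lemma V_antitone (v : ℕ → Fin m → ℝ) (hv : ∀ t, StepRel (v t) (v (t + 1))) :
    Antitone (V v) := by
  apply antitone_nat_of_succ_le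
  intro t
  rcases hv t with heq | ⟨p, q, hpq, havg⟩
  · rw [V, V]
    apply le_of_eq
    apply Finset.sum_congr rfl
    intro j _
    rw [heq]
  · have := V_avg v t p q hpq havg
    nlinarith [sq_nonneg (v t p - v t q)]

/-- Main convergence lemma: each coordinate of a pairwise-averaging
trajectory converges. -/
theorem gossip_conv (hm : 0 < m) (v : ℕ → Fin m → ℝ)
    (hv : ∀ t, StepRel (v t) (v (t + 1))) (i : Fin m) :
    ∃ L, Tendsto (fun t => v t i) atTop (𝓝 L) := by
  classical
  obtain ⟨hi, hhi⟩ := le_hi hm v hv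
  -- limits of the minimal subset sums
  set α : ℕ → ℝ := fun k => ⨆ t, Ak v k t with hα
  have hαtend : ∀ k, k ≤ m → Tendsto (fun t => Ak v k t) atTop (𝓝 (α k)) := by
    intro k hk
    apply tendsto_atTop_ciSup (Ak_mono v hv k)
    obtain ⟨s₀, hs₀⟩ := Finset.powersetCard_nonempty.mpr
      (by simpa using hk : k ≤ (univ : Finset (Fin m)).card)
    refine ⟨(k : ℝ) * hi, ?_⟩
    rintro x ⟨t, rfl⟩
    calc Ak v k t ≤ ∑ i ∈ s₀, v t i := Ak_le v t hs₀
      _ ≤ s₀.card • hi := Finset.sum_le_card_nsmul _ _ _ (fun b _ => hhi t b)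
      _ = (k : ℝ) * hi := by
        rw [(Finset.mem_powersetCard.mp hs₀).2, nsmul_eq_mul]
  set μ : ℕ → ℝ := fun k => α (k + 1) - α k with hμ
  -- limit of the Lyapunov function
  set ℓ : ℝ := ⨅ t, V v t with hℓ
  have hVbdd : BddBelow (Set.range (V v)) := ⟨0, by rintro x ⟨t, rfl⟩; exact V_nonneg v t⟩
  have hVtend : Tendsto (V v) atTop (𝓝 ℓ) := tendsto_atTop_ciInf (V_antitone v hv) hVbdd
  have hVge : ∀ t, ℓ ≤ V v t := fun t => ciInf_le hVbdd t
  -- Cauchy criterion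
  apply cauchySeq_tendsto_of_complete
  rw [Metric.cauchySeq_iff']
  intro ε hε
  -- choose the scale ε'
  set G : Finset ℝ :=
    ((Finset.range m ×ˢ Finset.range m).image (fun kl => |μ kl.1 - μ kl.2|)).filter
      (fun x => 0 < x) with hG
  set ε' : ℝ := if hGne : G.Nonempty then min (ε / 3) (G.min' hGne / 5) else ε / 3 with hε'
  have hε'pos : 0 < ε' := by
    rw [hε']
    split
    · rename_i hGne
      have h2 := (Finset.mem_filter.mp (G.min'_mem hGne)).2
      exact lt_min (by linarith) (by linarith)
    · linarith
  have hε'le : ε' ≤ ε / 3 := by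
    rw [hε']
    split
    · exact min_le_left _ _
    · exact le_rfl
  have hgap : ∀ k l, k < m → l < m → μ k ≠ μ l → 5 * ε' ≤ |μ k - μ l| := by
    intro k l hk hl hne
    have hmem : |μ k - μ l| ∈ G := by
      rw [hG, Finset.mem_filter]
      constructor
      · apply Finset.mem_image.mpr
        exact ⟨(k, l), Finset.mem_product.mpr ⟨Finset.mem_range.mpr hk, Finset.mem_range.mpr hl⟩, rfl⟩
      · exact abs_pos.mpr (sub_ne_zero.mpr hne)
    have hGne : G.Nonempty := ⟨_, hmem⟩
    have h1 : ε' ≤ G.min' hGne / 5 := by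
      rw [hε', dif_pos hGne]
      exact min_le_right _ _
    have h2 : G.min' hGne ≤ |μ k - μ l| := Finset.min'_le _ _ hmem
    linarith
  -- T₁ : uniform approximation of the Ak by their limits
  have h1 : ∀ k : ℕ, ∃ T, ∀ t ≥ T, k ≤ m → |Ak v k t - α k| < ε' / 2 := by
    intro k
    by_cases hk : k ≤ m
    · have htd := hαtend k hk
      rw [Metric.tendsto_atTop] at htd
      obtain ⟨T, hT⟩ := htd (ε' / 2) (by linarith)
      exact ⟨T, fun t ht _ => by have := hT t ht; rwa [Real.dist_eq] at this⟩
    · exact ⟨0, fun t _ hk' => absurd hk' hk⟩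
  choose T₁f hT₁f using h1
  set T₁ := (Finset.range (m + 2)).sup T₁f with hT₁
  have hclose : ∀ t, T₁ ≤ t → ∀ j : Fin m, ∃ k, k < m ∧ |v t j - μ k| < ε' := by
    intro t ht j
    obtain ⟨k, hk, hrep⟩ := rep v t j
    refine ⟨k, hk, ?_⟩
    have hk1 : T₁f (k + 1) ≤ T₁ := Finset.le_sup (Finset.mem_range.mpr (by omega))
    have hk0 : T₁f k ≤ T₁ := Finset.le_sup (Finset.mem_range.mpr (by omega))
    have e1 := hT₁f (k + 1) t (le_trans hk1 ht) (by omega)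
    have e2 := hT₁f k t (le_trans hk0 ht) (by omega)
    rw [hrep]
    show |(Ak v (k + 1) t - Ak v k t) - (α (k + 1) - α k)| < ε'
    have a1 := abs_lt.mp e1
    have a2 := abs_lt.mp e2
    rw [abs_lt]
    constructor <;> linarith [a1.1, a1.2, a2.1, a2.2]
  -- T₂ : eventually all jumps of coordinate i are small
  have hjump : ∃ T₂, ∀ t ≥ T₂, |v (t + 1) i - v t i| ≤ ε' := by
    obtain ⟨T₂, hT₂⟩ : ∃ T₂, ∀ t ≥ T₂, V v t < ℓ + 2 * ε' ^ 2 := by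
      rw [Metric.tendsto_atTop] at hVtend
      obtain ⟨T₂, hT₂⟩ := hVtend (2 * ε' ^ 2) (by positivity)
      refine ⟨T₂, fun t ht => ?_⟩
      have := hT₂ t ht
      rw [Real.dist_eq, abs_lt] at this
      linarith [this.2]
    refine ⟨T₂, fun t ht => ?_⟩
    rcases hv t with heq | ⟨p, q, hpq, havg⟩
    · rw [heq]
      simp [hε'pos.le]
    · have hdec := V_avg v t p q hpq havg
      have hV1 : ℓ ≤ V v (t + 1) := hVge (t + 1)
      have hVt : V v t < ℓ + 2 * ε' ^ 2 := hT₂ t ht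
      have hsq : (v t p - v t q) ^ 2 < 4 * ε' ^ 2 := by linarith
      have habs : |v t p - v t q| < 2 * ε' := by
        nlinarith [abs_nonneg (v t p - v t q), sq_abs (v t p - v t q)]
      have hd := abs_lt.mp habs
      rw [havg i]
      split
      · rename_i h
        rcases h with rfl | rfl
        · rw [abs_le]; constructor <;> linarith
        · rw [abs_le]; constructor <;> linarith
      · simp [hε'pos.le]
  obtain ⟨T₂, hT₂j⟩ := hjump
  set T := max T₁ T₂ with hT
  obtain ⟨k₀, hk₀, hvk₀⟩ := hclose T (le_max_left _ _) i
  have hstay : ∀ t, T ≤ t → |v t i - μ k₀| < ε' := by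
    intro t ht
    induction t, ht using Nat.le_induction with
    | base => exact hvk₀
    | succ t ht ih =>
      obtain ⟨k', hk', hcl'⟩ := hclose (t + 1)
        (le_trans (le_max_left T₁ T₂) (by omega)) i
      have hj := hT₂j t (le_trans (le_max_right T₁ T₂) ht)
      have a1 := abs_lt.mp hcl'
      have a2 := abs_lt.mp ih
      have a3 := abs_le.mp hj
      have htri : |μ k' - μ k₀| < 3 * ε' := by
        rw [abs_lt]
        constructor <;> linarith [a1.1, a1.2, a2.1, a2.2, a3.1, a3.2]
      have heqμ : μ k' = μ k₀ := by
        by_contra hne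
        have hg := hgap k' k₀ hk' hk₀ hne
        linarith
      rw [← heqμ]
      exact hcl'
  refine ⟨T, fun t ht => ?_⟩
  have b1 := abs_lt.mp (hstay t ht)
  have b2 := abs_lt.mp (hstay T le_rfl)
  rw [Real.dist_eq, abs_lt]
  constructor <;> linarith

end Gossip

/-- Any voting diffusion trajectory (arbitrary communicating pair
sequence and subject sets) converges entrywise. -/
theorem stmt4 (m n : ℕ) (hm : 2 ≤ m) (hn : 1 ≤ n)
    (p q : ℕ → Fin m) (hpq : ∀ t, p t ≠ q t)
    (S : ℕ → Set (Fin n))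
    (X : ℕ → Fin m → Fin n → ℝ)
    (hX1 : ∀ t (i : Fin m) (j : Fin n), (i = p t ∨ i = q t) → j ∈ S t →
      X (t + 1) i j = (X t (p t) j + X t (q t) j) / 2)
    (hX2 : ∀ t (i : Fin m) (j : Fin n), ¬((i = p t ∨ i = q t) ∧ j ∈ S t) →
      X (t + 1) i j = X t i j) :
    ∃ L : Fin m → Fin n → ℝ, ∀ (i : Fin m) (j : Fin n),
      Tendsto (fun t => X t i j) atTop (𝓝 (L i j)) := by
  classical
  have key : ∀ (i : Fin m) (j : Fin n), ∃ L, Tendsto (fun t => X t i j) atTop (𝓝 L) := by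
    intro i j
    refine Gossip.gossip_conv (by omega) (fun t i' => X t i' j) ?_ i
    intro t
    by_cases hjS : j ∈ S t
    · right
      refine ⟨p t, q t, hpq t, fun i' => ?_⟩
      by_cases hi' : i' = p t ∨ i' = q t
      · rw [if_pos hi']
        exact hX1 t i' j hi' hjS
      · rw [if_neg hi']
        exact hX2 t i' j (by tauto)
    · left
      funext i'
      exact hX2 t i' j (by tauto)
  choose L hL using key
  exact ⟨L, hL⟩
end

section
/- Consider a voting diffusion trajectory with m ≥ 2 agents and n ≥ 1 candidates. For a candidate j ∈ [n], let G^{(j)} = ([m], E^{(j)}) be the graph with E^{(j)} = {{i₁,i₂} : i₁ ≠ i₂ and the number of times t with {i₁(t), i₂(t)} = {i₁,i₂} and j ∈ S(t) is infinite}. Then for any two agents i₁, i₂ belonging to the same connected component of G^{(j)}, the agents eventually consent on candidate j: lim_{t→∞} (X_{i₁j}(t) − X_{i₂j}(t)) = 0. -/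
open Filter Topology

/-- If a walk starts inside a set `A` and ends outside, some edge of it crosses `A`. -/
lemma crossEdge {V : Type*} {G : SimpleGraph V} {A : Set V} {x y : V} (w : G.Walk x y) :
    x ∈ A → y ∉ A → ∃ a ∈ A, ∃ b, b ∉ A ∧ G.Adj a b := by
  induction w with
  | nil => exact fun hx hy => absurd hx hy
  | @cons u v z h w ih =>
    intro hx hy
    by_cases hv : v ∈ A
    · exact ih hv hy
    · exact ⟨u, hx, v, hv, h⟩

/-- A monotone bounded sequence of naturals is eventually constant. -/
lemma natMonoConst : ∀ (k : ℕ) (g : ℕ → ℕ), (∀ s, g s ≤ g (s + 1)) →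
    (∀ s, g s ≤ g 0 + k) → ∃ s₀, ∀ s, s₀ ≤ s → g s = g s₀ := by
  intro k
  induction k with
  | zero =>
    intro g hmono hB
    have hm : Monotone g := monotone_nat_of_le_succ hmono
    exact ⟨0, fun s hs => le_antisymm (by simpa using hB s) (hm (Nat.zero_le s))⟩
  | succ k ih =>
    intro g hmono hB
    have hm : Monotone g := monotone_nat_of_le_succ hmono
    by_cases h : ∀ s, g s = g 0
    · exact ⟨0, fun s _ => h s⟩
    · push_neg at h
      obtain ⟨s₁, hs₁⟩ := h
      have hgt : g 0 + 1 ≤ g s₁ :=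
        Nat.succ_le_of_lt (lt_of_le_of_ne (hm (Nat.zero_le s₁)) (Ne.symm hs₁))
      obtain ⟨s₀', hs₀'⟩ := ih (fun s => g (s₁ + s)) (fun s => hmono (s₁ + s))
        (fun s => by have := hB (s₁ + s); simp only [Nat.add_zero]; omega)
      refine ⟨s₁ + s₀', fun s hs => ?_⟩
      have h1 : g (s₁ + (s - s₁)) = g (s₁ + s₀') := hs₀' (s - s₁) (by omega)
      rwa [show s₁ + (s - s₁) = s by omega] at h1

/-- A monotone sequence of finsets over a fintype is eventually constant. -/
lemma finsetMonoConst {α : Type*} [Fintype α] (f : ℕ → Finset α)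
    (hmono : ∀ s, f s ⊆ f (s + 1)) : ∃ s₀, ∀ s, s₀ ≤ s → f s = f s₀ := by
  have hmono' : ∀ s s', s ≤ s' → f s ⊆ f s' := by
    intro s s' h
    induction h with
    | refl => exact Finset.Subset.refl _
    | step h ih => exact ih.trans (hmono _)
  obtain ⟨s₀, hs₀⟩ := natMonoConst (Fintype.card α) (fun s => (f s).card)
    (fun s => Finset.card_le_card (hmono s))
    (fun s => le_trans (Finset.card_le_univ _) (by simp [Finset.card_univ]))
  refine ⟨s₀, fun s hs => ?_⟩
  exact (Finset.eq_of_subset_of_card_le (hmono' s₀ s hs) (le_of_eq (hs₀ s hs))).symm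

/-- Main consensus lemma for a single coordinate. -/
lemma consensus {m : ℕ} (p q : ℕ → Fin m) (hpq : ∀ t, p t ≠ q t) (U : ℕ → Prop)
    (Y : ℕ → Fin m → ℝ)
    (havg : ∀ t, U t → ∀ i, (i = p t ∨ i = q t) → Y (t + 1) i = (Y t (p t) + Y t (q t)) / 2)
    (hfix : ∀ t i, (¬ U t ∨ (i ≠ p t ∧ i ≠ q t)) → Y (t + 1) i = Y t i)
    (G : SimpleGraph (Fin m))
    (hG : G = SimpleGraph.fromRel (fun a b =>
      {t : ℕ | ((p t = a ∧ q t = b) ∨ (p t = b ∧ q t = a)) ∧ U t}.Infinite))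
    (i₁ i₂ : Fin m) (h12 : G.Reachable i₁ i₂) :
    Tendsto (fun t => Y t i₁ - Y t i₂) atTop (𝓝 0) := by
  classical
  -- adjacency characterizations
  have hAdjI : ∀ a b, G.Adj a b →
      ({t : ℕ | ((p t = a ∧ q t = b) ∨ (p t = b ∧ q t = a)) ∧ U t}).Infinite := by
    intro a b hadj
    rw [hG, SimpleGraph.fromRel_adj] at hadj
    rcases hadj.2 with h | h
    · exact h
    · exact h.mono (fun t ht => ⟨ht.1.symm, ht.2⟩)
  have hIAdj : ∀ a b, a ≠ b →
      ({t : ℕ | ((p t = a ∧ q t = b) ∨ (p t = b ∧ q t = a)) ∧ U t}).Infinite → G.Adj a b := by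
    intro a b hne h
    rw [hG, SimpleGraph.fromRel_adj]
    exact ⟨hne, Or.inl h⟩
  -- the component of i₁, as an opaque finset
  obtain ⟨C, hmemC⟩ : ∃ C : Finset (Fin m), ∀ v, v ∈ C ↔ G.Reachable i₁ v :=
    ⟨Finset.univ.filter (fun v => G.Reachable i₁ v), fun v => by simp⟩
  have hi₁C : i₁ ∈ C := (hmemC i₁).mpr (SimpleGraph.Reachable.refl i₁)
  have hi₂C : i₂ ∈ C := (hmemC i₂).mpr h12
  have hCne : C.Nonempty := ⟨i₁, hi₁C⟩
  -- bad times (interactions crossing the boundary of C) are finite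
  have hfib : ∀ a b : Fin m,
      {t : ℕ | (U t ∧ ¬ ((p t ∈ C) ↔ (q t ∈ C))) ∧ p t = a ∧ q t = b}.Finite := by
    intro a b
    by_contra hinf
    have hinf' : {t : ℕ | (U t ∧ ¬ ((p t ∈ C) ↔ (q t ∈ C))) ∧ p t = a ∧ q t = b}.Infinite := hinf
    obtain ⟨t₀, ht₀⟩ := hinf'.nonempty
    have hne : a ≠ b := by
      rintro rfl
      exact hpq t₀ (ht₀.2.1.trans ht₀.2.2.symm)
    have hI : ({t : ℕ | ((p t = a ∧ q t = b) ∨ (p t = b ∧ q t = a)) ∧ U t}).Infinite :=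
      hinf'.mono (fun t ht => ⟨Or.inl ⟨ht.2.1, ht.2.2⟩, ht.1.1⟩)
    have hadj := hIAdj a b hne hI
    have hiff : G.Reachable i₁ a ↔ G.Reachable i₁ b :=
      ⟨fun h => h.trans hadj.reachable, fun h => h.trans hadj.symm.reachable⟩
    apply ht₀.1.2
    rw [ht₀.2.1, ht₀.2.2, hmemC, hmemC]
    exact hiff
  have hBadFin : {t : ℕ | U t ∧ ¬ ((p t ∈ C) ↔ (q t ∈ C))}.Finite := by
    have hsub : {t : ℕ | U t ∧ ¬ ((p t ∈ C) ↔ (q t ∈ C))} ⊆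
        ⋃ a : Fin m, ⋃ b : Fin m,
          {t : ℕ | (U t ∧ ¬ ((p t ∈ C) ↔ (q t ∈ C))) ∧ p t = a ∧ q t = b} := by
      intro t ht
      simp only [Set.mem_iUnion]
      exact ⟨p t, q t, ht, rfl, rfl⟩
    exact Set.Finite.subset (Set.finite_iUnion fun a => Set.finite_iUnion fun b => hfib a b) hsub
  obtain ⟨T₀, hT₀⟩ : ∃ T₀, ∀ t, T₀ ≤ t → U t → ((p t ∈ C) ↔ (q t ∈ C)) := by
    obtain ⟨B, hB⟩ := hBadFin.bddAbove
    refine ⟨B + 1, fun t ht hU => ?_⟩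
    by_contra hc
    have := hB (Set.mem_setOf.mpr ⟨hU, hc⟩)
    omega
  -- one-step characterization inside C, after time T₀
  have hstep : ∀ t, T₀ ≤ t → ∀ i ∈ C, Y (t + 1) i = Y t i ∨
      (U t ∧ p t ∈ C ∧ q t ∈ C ∧ Y (t + 1) i = (Y t (p t) + Y t (q t)) / 2) := by
    intro t ht i hiC
    rcases Classical.em (U t) with hU | hU
    · rcases Classical.em (i = p t ∨ i = q t) with hi | hi
      · right
        have hiff := hT₀ t ht hU
        have hpqC : p t ∈ C ∧ q t ∈ C := by
          rcases hi with rfl | rfl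
          · exact ⟨hiC, hiff.mp hiC⟩
          · exact ⟨hiff.mpr hiC, hiC⟩
        exact ⟨hU, hpqC.1, hpqC.2, havg t hU i hi⟩
      · push_neg at hi
        exact Or.inl (hfix t i (Or.inr hi))
    · exact Or.inl (hfix t i (Or.inl hU))
  -- max and min over C, as opaque functions
  obtain ⟨Mx, hMxd⟩ : ∃ f : ℕ → ℝ, ∀ t, f t = C.sup' hCne (Y t) := ⟨_, fun _ => rfl⟩
  obtain ⟨mn, hmnd⟩ : ∃ f : ℕ → ℝ, ∀ t, f t = C.inf' hCne (Y t) := ⟨_, fun _ => rfl⟩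
  have hleMx : ∀ t, ∀ i ∈ C, Y t i ≤ Mx t := by
    intro t i hi; rw [hMxd]; exact Finset.le_sup' (Y t) hi
  have hmnle : ∀ t, ∀ i ∈ C, mn t ≤ Y t i := by
    intro t i hi; rw [hmnd]; exact Finset.inf'_le (Y t) hi
  have hub : ∀ t, T₀ ≤ t → ∀ s, ∀ i ∈ C, Y (t + s) i ≤ Mx t := by
    intro t ht s
    induction s with
    | zero => exact fun i hi => hleMx t i hi
    | succ s ih =>
      intro i hi
      have ht' : T₀ ≤ t + s := le_trans ht (Nat.le_add_right _ _)
      rcases hstep (t + s) ht' i hi with h | ⟨_, hp, hq, h⟩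
      · rw [show t + (s + 1) = (t + s) + 1 from rfl, h]
        exact ih i hi
      · rw [show t + (s + 1) = (t + s) + 1 from rfl, h]
        have h1 := ih _ hp
        have h2 := ih _ hq
        linarith
  have hlb : ∀ t, T₀ ≤ t → ∀ s, ∀ i ∈ C, mn t ≤ Y (t + s) i := by
    intro t ht s
    induction s with
    | zero => exact fun i hi => hmnle t i hi
    | succ s ih =>
      intro i hi
      have ht' : T₀ ≤ t + s := le_trans ht (Nat.le_add_right _ _)
      rcases hstep (t + s) ht' i hi with h | ⟨_, hp, hq, h⟩
      · rw [show t + (s + 1) = (t + s) + 1 from rfl, h]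
        exact ih i hi
      · rw [show t + (s + 1) = (t + s) + 1 from rfl, h]
        have h1 := ih _ hp
        have h2 := ih _ hq
        linarith
  have hMxanti : ∀ t, T₀ ≤ t → ∀ s, Mx (t + s) ≤ Mx t := by
    intro t ht s
    rw [hMxd (t + s)]
    exact Finset.sup'_le _ _ (fun i hi => hub t ht s i hi)
  have hmnmono : ∀ t, T₀ ≤ t → ∀ s, mn t ≤ mn (t + s) := by
    intro t ht s
    rw [hmnd (t + s)]
    exact Finset.le_inf' _ _ (fun i hi => hlb t ht s i hi)
  obtain ⟨d, hd⟩ : ∃ f : ℕ → ℝ, ∀ t, f t = Mx t - mn t := ⟨_, fun _ => rfl⟩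
  have hd0 : ∀ t, 0 ≤ d t := by
    intro t
    have h1 := hmnle t i₁ hi₁C
    have h2 := hleMx t i₁ hi₁C
    rw [hd]; linarith
  have hdanti : ∀ t, T₀ ≤ t → ∀ s, d (t + s) ≤ d t := by
    intro t ht s
    have h1 := hMxanti t ht s
    have h2 := hmnmono t ht s
    rw [hd, hd]; linarith
  -- every G-edge occurs after any given time
  have hocc : ∀ a b, G.Adj a b → ∀ N, ∃ t, N ≤ t ∧ U t ∧
      ((p t = a ∧ q t = b) ∨ (p t = b ∧ q t = a)) := by
    intro a b hadj N
    obtain ⟨t, ht, hNt⟩ := (hAdjI a b hadj).exists_gt N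
    exact ⟨t, hNt.le, ht.2, ht.1⟩
  -- KEY: contraction of the max
  have key : ∀ T, T₀ ≤ T → ∃ s, ∀ i ∈ C,
      Y (T + s) i ≤ Mx T - d T * (1 / 2) ^ (C.card - 1) := by
    intro T hT
    obtain ⟨i₀, hi₀C, hi₀⟩ := Finset.exists_mem_eq_inf' hCne (Y T)
    obtain ⟨A, hA0, hAs⟩ : ∃ A : ℕ → Finset (Fin m), A 0 = {i₀} ∧ ∀ s,
        A (s + 1) = @ite _ (U (T + s) ∧ (p (T + s) ∈ A s ∨ q (T + s) ∈ A s))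
          (Classical.propDecidable _)
          (insert (p (T + s)) (insert (q (T + s)) (A s))) (A s) :=
      ⟨fun s => Nat.rec {i₀}
        (fun s' As => @ite _ (U (T + s') ∧ (p (T + s') ∈ As ∨ q (T + s') ∈ As))
          (Classical.propDecidable _)
          (insert (p (T + s')) (insert (q (T + s')) As)) As) s, rfl, fun s => rfl⟩
    have hmono1 : ∀ s, A s ⊆ A (s + 1) := by
      intro s
      rw [hAs]
      split
      · exact (Finset.subset_insert _ _).trans (Finset.subset_insert _ _)
      · exact Finset.Subset.refl _
    have hmono : ∀ s s', s ≤ s' → A s ⊆ A s' := by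
      intro s s' h
      induction h with
      | refl => exact Finset.Subset.refl _
      | step h ih => exact ih.trans (hmono1 _)
    have hi₀A : ∀ s, i₀ ∈ A s := by
      intro s
      exact hmono 0 s (Nat.zero_le s) (by rw [hA0]; exact Finset.mem_singleton_self i₀)
    have hInv : ∀ s, A s ⊆ C ∧ ∀ i ∈ A s,
        Y (T + s) i ≤ Mx T - d T * (1 / 2) ^ ((A s).card - 1) := by
      intro s
      induction s with
      | zero =>
        constructor
        · intro x hx
          rw [hA0, Finset.mem_singleton] at hx
          subst hx; exact hi₀C
        · intro i hi
          rw [hA0, Finset.mem_singleton] at hi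
          have hcard : (A 0).card = 1 := by rw [hA0]; exact Finset.card_singleton i₀
          have e1 : d T = Mx T - mn T := hd T
          have e2 : Y (T + 0) i₀ = mn T := by
            rw [Nat.add_zero, hmnd]; exact hi₀.symm
          rw [hi, hcard]
          simp only [Nat.sub_self, pow_zero, mul_one]
          rw [e2]; linarith
      | succ s ih =>
        obtain ⟨hsubC, hbound⟩ := ih
        have htT : T₀ ≤ T + s := le_trans hT (Nat.le_add_right _ _)
        have hglob : ∀ i ∈ C, Y (T + s) i ≤ Mx T := hub T hT s
        have hAne : 1 ≤ (A s).card := Finset.card_pos.mpr ⟨i₀, hi₀A s⟩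
        have hdpow : 0 ≤ d T * (1 / 2 : ℝ) ^ ((A s).card - 1) := by
          apply mul_nonneg (hd0 T); positivity
        rcases Classical.em (U (T + s) ∧ (p (T + s) ∈ A s ∨ q (T + s) ∈ A s)) with
          hcond | hcond
        · obtain ⟨hU, hpq'⟩ := hcond
          have hpC : p (T + s) ∈ C ∧ q (T + s) ∈ C := by
            have hiff := hT₀ _ htT hU
            rcases hpq' with h | h
            · exact ⟨hsubC h, hiff.mp (hsubC h)⟩
            · exact ⟨hiff.mpr (hsubC h), hsubC h⟩
          have hAexp : A (s + 1) = insert (p (T + s)) (insert (q (T + s)) (A s)) := by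
            rw [hAs]; exact if_pos ⟨hU, hpq'⟩
          have hsub' : A (s + 1) ⊆ C := by
            rw [hAexp]
            intro x hx
            rcases Finset.mem_insert.mp hx with rfl | hx'
            · exact hpC.1
            · rcases Finset.mem_insert.mp hx' with rfl | hx''
              · exact hpC.2
              · exact hsubC hx''
          refine ⟨hsub', ?_⟩
          rcases Classical.em (p (T + s) ∈ A s ∧ q (T + s) ∈ A s) with hboth | hboth
          · -- A unchanged
            have hEq : A (s + 1) = A s := by
              rw [hAexp, Finset.insert_eq_self.mpr hboth.2,
                Finset.insert_eq_self.mpr hboth.1]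
            rw [hEq]
            intro i hi
            rcases Classical.em (i = p (T + s) ∨ i = q (T + s)) with hi' | hi'
            · have hv := havg _ hU i hi'
              have h1 := hbound _ hboth.1
              have h2 := hbound _ hboth.2
              rw [show T + (s + 1) = (T + s) + 1 from rfl, hv]
              linarith
            · push_neg at hi'
              rw [show T + (s + 1) = (T + s) + 1 from rfl, hfix _ i (Or.inr hi')]
              exact hbound i hi
          · -- exactly one new element is added
            have honem : (p (T + s) ∈ A s ∧ q (T + s) ∉ A s) ∨
                (q (T + s) ∈ A s ∧ p (T + s) ∉ A s) := by tauto
            have hcard : (A (s + 1)).card = (A s).card + 1 := by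
              rcases honem with ⟨hp1, hq1⟩ | ⟨hq1, hp1⟩
              · rw [hAexp, Finset.insert_eq_self.mpr (Finset.mem_insert_of_mem hp1),
                  Finset.card_insert_of_notMem hq1]
              · rw [hAexp, Finset.insert_eq_self.mpr hq1,
                  Finset.card_insert_of_notMem hp1]
            have hk : (A (s + 1)).card - 1 = ((A s).card - 1) + 1 := by omega
            have hB : d T * (1 / 2 : ℝ) ^ (((A s).card - 1) + 1) =
                (d T * (1 / 2) ^ ((A s).card - 1)) / 2 := by
              rw [pow_succ]; ring
            intro i hi
            rw [hk, hB]
            rcases Classical.em (i = p (T + s) ∨ i = q (T + s)) with hi' | hi'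
            · have hv := havg _ hU i hi'
              rw [show T + (s + 1) = (T + s) + 1 from rfl, hv]
              rcases honem with ⟨hp1, _⟩ | ⟨hq1, _⟩
              · have h1 := hbound _ hp1
                have h2 := hglob _ hpC.2
                linarith
              · have h1 := hbound _ hq1
                have h2 := hglob _ hpC.1
                linarith
            · push_neg at hi'
              have hiA : i ∈ A s := by
                rw [hAexp] at hi
                rcases Finset.mem_insert.mp hi with rfl | hi2
                · exact absurd rfl hi'.1
                · rcases Finset.mem_insert.mp hi2 with rfl | hi3
                  · exact absurd rfl hi'.2
                  · exact hi3
              rw [show T + (s + 1) = (T + s) + 1 from rfl, hfix _ i (Or.inr hi')]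
              have h1 := hbound i hiA
              linarith
        · have hEq : A (s + 1) = A s := by rw [hAs]; exact if_neg hcond
          rw [hEq]
          refine ⟨hsubC, fun i hi => ?_⟩
          have hfixi : Y (T + s + 1) i = Y (T + s) i := by
            rcases Classical.em (U (T + s)) with hU | hU
            · have hnp : ¬ (p (T + s) ∈ A s ∨ q (T + s) ∈ A s) := fun h => hcond ⟨hU, h⟩
              push_neg at hnp
              refine hfix _ i (Or.inr ⟨?_, ?_⟩)
              · rintro rfl; exact hnp.1 hi
              · rintro rfl; exact hnp.2 hi
            · exact hfix _ i (Or.inl hU)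
          rw [show T + (s + 1) = (T + s) + 1 from rfl, hfixi]
          exact hbound i hi
    -- A stabilizes, and the stable set must be all of C
    obtain ⟨s₀, hs₀⟩ := finsetMonoConst A hmono1
    have hAC : A s₀ = C := by
      refine Classical.byContradiction fun hne => ?_
      have hssub : A s₀ ⊂ C := lt_of_le_of_ne (hInv s₀).1 hne
      obtain ⟨y, hyC, hyA⟩ := Finset.exists_of_ssubset hssub
      have hry : G.Reachable i₀ y := ((hmemC i₀).mp hi₀C).symm.trans ((hmemC y).mp hyC)
      obtain ⟨w⟩ := hry
      obtain ⟨a, haA, b, hbA, hadj⟩ := crossEdge (A := (↑(A s₀) : Set (Fin m))) w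
        (by exact_mod_cast hi₀A s₀) (by exact_mod_cast hyA)
      obtain ⟨t, htge, hUt, hpq2⟩ := hocc a b hadj (T + s₀)
      have hts : t = T + (t - T) := by omega
      set s := t - T with hs_def
      have hss₀ : s₀ ≤ s := by omega
      have hAeq : A s = A s₀ := hs₀ s hss₀
      have haA' : a ∈ A s := by rw [hAeq]; exact_mod_cast haA
      have hcond : U (T + s) ∧ (p (T + s) ∈ A s ∨ q (T + s) ∈ A s) := by
        rw [← hts]
        refine ⟨hUt, ?_⟩
        rcases hpq2 with ⟨h1, _⟩ | ⟨_, h2⟩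
        · left; rw [h1]; exact haA'
        · right; rw [h2]; exact haA'
      have hbmem : b ∈ A (s + 1) := by
        rw [hAs, if_pos hcond, ← hts]
        rcases hpq2 with ⟨_, h2⟩ | ⟨h1, _⟩
        · exact Finset.mem_insert_of_mem (by rw [h2]; exact Finset.mem_insert_self _ _)
        · rw [← h1]; exact Finset.mem_insert_self _ _
      have : b ∈ A s₀ := by rw [← hs₀ (s + 1) (by omega)]; exact hbmem
      exact hbA (by exact_mod_cast this)
    refine ⟨s₀, fun i hiC' => ?_⟩
    have hb := (hInv s₀).2 i (by rw [hAC]; exact hiC')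
    rwa [hAC] at hb
  -- contraction of d
  have hcard_le : C.card ≤ m := by
    have := Finset.card_le_univ C
    simpa using this
  have hpow : (1 / 2 : ℝ) ^ (m - 1) ≤ (1 / 2) ^ (C.card - 1) :=
    pow_le_pow_of_le_one (by norm_num) (by norm_num) (by omega)
  obtain ⟨c, hc⟩ : ∃ c : ℝ, c = 1 - (1 / 2) ^ (m - 1) := ⟨_, rfl⟩
  have hc0 : 0 ≤ c := by
    have h1 : (1 / 2 : ℝ) ^ (m - 1) ≤ 1 := pow_le_one₀ (by norm_num) (by norm_num)
    rw [hc]; linarith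
  have hc1 : c < 1 := by
    have h1 : (0 : ℝ) < (1 / 2) ^ (m - 1) := by positivity
    rw [hc]; linarith
  have hkey2 : ∀ T, T₀ ≤ T → ∃ T', T ≤ T' ∧ d T' ≤ c * d T := by
    intro T hT
    obtain ⟨s, hsb⟩ := key T hT
    refine ⟨T + s, Nat.le_add_right _ _, ?_⟩
    have h1 : Mx (T + s) ≤ Mx T - d T * (1 / 2) ^ (C.card - 1) := by
      rw [hMxd (T + s)]
      exact Finset.sup'_le _ _ hsb
    have h2 : mn T ≤ mn (T + s) := hmnmono T hT s
    have h3 : d T * (1 / 2 : ℝ) ^ (m - 1) ≤ d T * (1 / 2) ^ (C.card - 1) :=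
      mul_le_mul_of_nonneg_left hpow (hd0 T)
    have e1 : d (T + s) = Mx (T + s) - mn (T + s) := hd _
    have e2 : d T = Mx T - mn T := hd T
    have e3 : c * d T = d T - d T * (1 / 2) ^ (m - 1) := by rw [hc]; ring
    linarith
  -- iterate the contraction
  have hiter : ∀ k : ℕ, ∃ T, T₀ ≤ T ∧ d T ≤ c ^ k * d T₀ := by
    intro k
    induction k with
    | zero => exact ⟨T₀, le_refl _, by simp⟩
    | succ k ih =>
      obtain ⟨T, hT, hdT⟩ := ih
      obtain ⟨T', hT', hd'⟩ := hkey2 T hT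
      refine ⟨T', le_trans hT hT', ?_⟩
      calc d T' ≤ c * d T := hd'
        _ ≤ c * (c ^ k * d T₀) := mul_le_mul_of_nonneg_left hdT hc0
        _ = c ^ (k + 1) * d T₀ := by ring
  -- d tends to 0
  have hdlim : Tendsto d atTop (𝓝 0) := by
    rw [Metric.tendsto_atTop]
    intro ε hε
    have hcpow : Tendsto (fun k : ℕ => c ^ k * d T₀) atTop (𝓝 0) := by
      have := (tendsto_pow_atTop_nhds_zero_of_lt_one hc0 hc1).mul_const (d T₀)
      simpa using this
    obtain ⟨k, hk⟩ := (hcpow.eventually (gt_mem_nhds hε)).exists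
    obtain ⟨T, hT, hdT⟩ := hiter k
    refine ⟨T, fun t ht => ?_⟩
    have hle : d t ≤ d T := by
      have := hdanti T hT (t - T)
      rwa [show T + (t - T) = t by omega] at this
    rw [Real.dist_eq, sub_zero, abs_of_nonneg (hd0 t)]
    exact lt_of_le_of_lt (le_trans hle hdT) hk
  -- squeeze
  have hbnd : ∀ t, ‖Y t i₁ - Y t i₂‖ ≤ d t := by
    intro t
    have h1 := hleMx t i₁ hi₁C
    have h2 := hleMx t i₂ hi₂C
    have h3 := hmnle t i₁ hi₁C
    have h4 := hmnle t i₂ hi₂C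
    have e : d t = Mx t - mn t := hd t
    rw [Real.norm_eq_abs, abs_le]
    constructor <;> linarith
  exact squeeze_zero_norm hbnd hdlim

/-- In a voting diffusion trajectory, for each candidate j, any two
agents in the same connected component of the graph G^{(j)} (whose edges are the
pairs of agents that discuss candidate j infinitely often) eventually consent on
candidate j. -/
theorem stmt5 (m n : ℕ) (hm : 2 ≤ m) (hn : 1 ≤ n)
    (p q : ℕ → Fin m) (hpq : ∀ t, p t ≠ q t)
    (S : ℕ → Set (Fin n))
    (X : ℕ → Fin m → Fin n → ℝ)
    (hX1 : ∀ t (i : Fin m) (j : Fin n), (i = p t ∨ i = q t) → j ∈ S t →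
      X (t + 1) i j = (X t (p t) j + X t (q t) j) / 2)
    (hX2 : ∀ t (i : Fin m) (j : Fin n), ¬((i = p t ∨ i = q t) ∧ j ∈ S t) →
      X (t + 1) i j = X t i j)
    (j : Fin n) (G : SimpleGraph (Fin m))
    (hG : G = SimpleGraph.fromRel (fun a b =>
      {t : ℕ | ((p t = a ∧ q t = b) ∨ (p t = b ∧ q t = a)) ∧ j ∈ S t}.Infinite)) :
    ∀ i₁ i₂ : Fin m, G.Reachable i₁ i₂ →
      Tendsto (fun t => X t i₁ j - X t i₂ j) atTop (𝓝 0) := by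
  intro i₁ i₂ h12
  exact consensus p q hpq (fun t => j ∈ S t) (fun t i => X t i j)
    (fun t hU i hi => hX1 t i j hi hU)
    (fun t i h => hX2 t i j (fun hc => by
      rcases h with h | h
      · exact h hc.2
      · rcases hc.1 with h1 | h1
        · exact h.1 h1
        · exact h.2 h1))
    G hG i₁ i₂ h12
end

section
/- Consider the generalized top-k selective gossiping trajectory with m ≥ 2 agents, n ≥ 1 candidates, and k ∈ [n], and let X(∞) = lim_{t→∞} X(t) denote the (existing) entrywise limit of the dynamics. For any pair {i₁,i₂} ∈ E of the connectivity graph and any candidate j ∈ S^∞_{i₁i₂}, the two agents consent on j in the limit: X_{i₁j}(∞) = X_{i₂j}(∞). -/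
/-!
Whenever the pair {i₁, i₂} is activated and j is selected, both agents take the same average on
coordinate j, so X_{i₁j}(t+1) = X_{i₂j}(t+1). This happens for infinitely many t, so the shifted
sequences t ↦ X_{i₁j}(t+1) and t ↦ X_{i₂j}(t+1) agree frequently; since they converge, their limits
coincide.
-/

open Filter Topology

/-- The set of indices of the top-k entries of v: indices j for which fewer
than k entries of v are strictly greater than v j. -/
def topSet {n : ℕ} (k : ℕ) (v : Fin n → ℝ) : Set (Fin n) :=
  {j | Set.ncard {l | v j < v l} < k}

theorem gossip_eq_after_update {ι κ : Type*} {p q : ℕ → ι} {X : ℕ → ι → κ → ℝ}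
    {S : ℕ → Set κ}
    (hX1 : ∀ t i j, (i = p t ∨ i = q t) → j ∈ S t →
      X (t + 1) i j = (X t (p t) j + X t (q t) j) / 2)
    {t : ℕ} {i₁ i₂ : ι} {j : κ}
    (hpair : (p t = i₁ ∧ q t = i₂) ∨ (p t = i₂ ∧ q t = i₁)) (hj : j ∈ S t) :
    X (t + 1) i₁ j = X (t + 1) i₂ j := by
  have h₁ : i₁ = p t ∨ i₁ = q t := by
    rcases hpair with ⟨hp, -⟩ | ⟨-, hq⟩
    exacts [Or.inl hp.symm, Or.inr hq.symm]
  have h₂ : i₂ = p t ∨ i₂ = q t := by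
    rcases hpair with ⟨-, hq⟩ | ⟨hp, -⟩
    exacts [Or.inr hq.symm, Or.inl hp.symm]
  rw [hX1 t i₁ j h₁ hj, hX1 t i₂ j h₂ hj]

theorem stmt9_general (m n : ℕ)
    (p q : ℕ → Fin m)
    (X : ℕ → Fin m → Fin n → ℝ)
    (S : ℕ → Set (Fin n))
    (hX1 : ∀ t (i : Fin m) (j : Fin n), (i = p t ∨ i = q t) → j ∈ S t →
      X (t + 1) i j = (X t (p t) j + X t (q t) j) / 2)
    (Xinf : Fin m → Fin n → ℝ)
    (hlim : ∀ (i : Fin m) (j : Fin n),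
      Tendsto (fun t => X t i j) atTop (𝓝 (Xinf i j))) :
    ∀ i₁ i₂ : Fin m, i₁ ≠ i₂ →
      {t : ℕ | (p t = i₁ ∧ q t = i₂) ∨ (p t = i₂ ∧ q t = i₁)}.Infinite →
      ∀ j : Fin n,
        {t : ℕ | ((p t = i₁ ∧ q t = i₂) ∨ (p t = i₂ ∧ q t = i₁)) ∧
          j ∈ S t}.Infinite →
        Xinf i₁ j = Xinf i₂ j := by
  intro i₁ i₂ _ _ j hselected
  have hshift : ∀ i, Tendsto (fun t => X (t + 1) i j) atTop (𝓝 (Xinf i j)) := fun i =>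
    (hlim i j).comp (tendsto_add_atTop_nat 1)
  have hagree : ∃ᶠ t in atTop, X (t + 1) i₁ j = X (t + 1) i₂ j :=
    (Nat.frequently_atTop_iff_infinite.2 hselected).mono fun _ ht =>
      gossip_eq_after_update hX1 ht.1 ht.2
  exact tendsto_nhds_unique_of_frequently_eq (hshift i₁) (hshift i₂) hagree

/-- In the generalized top-k selective gossiping trajectory, for
any edge {i₁,i₂} of the connectivity graph and any candidate j ∈ S^∞_{i₁i₂},
the two agents consent on j in the limit: X_{i₁j}(∞) = X_{i₂j}(∞). -/
theorem stmt9 (m n k : ℕ) (hm : 2 ≤ m) (hk : 1 ≤ k) (hkn : k ≤ n)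
    (p q : ℕ → Fin m) (hpq : ∀ t, p t ≠ q t)
    (X : ℕ → Fin m → Fin n → ℝ)
    (S : ℕ → Set (Fin n))
    (hS : ∀ t, S t = topSet k (X t (p t)) ∪ topSet k (X t (q t)))
    (hX1 : ∀ t (i : Fin m) (j : Fin n), (i = p t ∨ i = q t) → j ∈ S t →
      X (t + 1) i j = (X t (p t) j + X t (q t) j) / 2)
    (hX2 : ∀ t (i : Fin m) (j : Fin n), ¬((i = p t ∨ i = q t) ∧ j ∈ S t) →
      X (t + 1) i j = X t i j)
    (Xinf : Fin m → Fin n → ℝ)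
    (hlim : ∀ (i : Fin m) (j : Fin n),
      Tendsto (fun t => X t i j) atTop (𝓝 (Xinf i j))) :
    ∀ i₁ i₂ : Fin m, i₁ ≠ i₂ →
      {t : ℕ | (p t = i₁ ∧ q t = i₂) ∨ (p t = i₂ ∧ q t = i₁)}.Infinite →
      ∀ j : Fin n,
        {t : ℕ | ((p t = i₁ ∧ q t = i₂) ∨ (p t = i₂ ∧ q t = i₁)) ∧
          j ∈ S t}.Infinite →
        Xinf i₁ j = Xinf i₂ j :=
  stmt9_general m n p q X S hX1 Xinf hlim
end

section
/- Consider the generalized top-k selective gossiping trajectory with m ≥ 2 agents, n ≥ 1 candidates, and k ∈ [n], assume the connectivity graph G = ([m], E) is connected, and let X(∞) = lim_{t→∞} X(t) denote the (existing) entrywise limit. Fix {i₁,i₂} ∈ E and let α_{i₁i₂} = min_{j ∈ S^∞_{i₁i₂}} X_{i₁j}(∞). Then for any candidate j ∉ S^∞_{i₁i₂} and any agent i ∈ [m], X_{ij}(∞) ≤ α_{i₁i₂}; that is, eventually the opinion of every agent on any candidate not discussed infinitely often by i₁ and i₂ is at most α_{i₁i₂}. -/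
/-!
For a pair `{a, b}` meeting infinitely often, the two agents agree in the limit on every
candidate of `S^∞_{ab}`, and eventually every selection made at their meetings lies in
`S^∞_{ab}`. Passing top-`k` memberships to the limit shows that the minimum `γ` of `X_a(∞)`
over `S^∞_{ab}` is the `k`-th largest entry of both `X_a(∞)` and `X_b(∞)`, and that both
agents rate every candidate outside `S^∞_{ab}` at most `γ`. As the `k`-th largest entry of
`X_a(∞)` depends on `a` alone, all pairs share the threshold `α`, and connectivity carries the
bound from `i₁` to every agent.
-/

open Filter Topology

section TopSet

variable {n k : ℕ}

theorem lt_of_notMem_topSet {v : Fin n → ℝ} {j l : Fin n}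
    (hj : j ∉ topSet k v) (hl : l ∈ topSet k v) : v j < v l := by
  by_contra! h
  exact hj <| (Set.ncard_le_ncard (fun x hx => h.trans_lt hx) (Set.toFinite _)).trans_lt hl

-- An entry maximal outside `topSet k v` is beaten only by members of `topSet k v`.
theorem le_ncard_topSet (hkn : k ≤ n) (v : Fin n → ℝ) : k ≤ (topSet k v).ncard := by
  by_contra! hlt
  have hne : (topSet k v)ᶜ.Nonempty := by
    rw [Set.nonempty_compl]
    rintro htop
    rw [htop, Set.ncard_univ, Nat.card_eq_fintype_card, Fintype.card_fin] at hlt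
    omega
  obtain ⟨j, hj, hmax⟩ := Set.exists_max_image _ v (Set.toFinite _) hne
  have hsub : {l | v j < v l} ⊆ topSet k v := fun l hl => by
    by_contra hl'
    exact not_lt.2 (hmax l hl') hl
  exact hj ((Set.ncard_le_ncard hsub (Set.toFinite _)).trans_lt hlt)

theorem mem_topSet_of_frequently {ι : Type*} {L : Filter ι} {v : ι → Fin n → ℝ}
    {w : Fin n → ℝ} {j : Fin n} (hv : Tendsto v L (𝓝 w))
    (h : ∃ᶠ t in L, j ∈ topSet k (v t)) : j ∈ topSet k w := by
  have hev : ∀ᶠ t in L, ∀ x ∈ {x | w j < w x}, v t j < v t x :=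
    (Set.toFinite _).eventually_all.2 fun x hx =>
      (tendsto_pi_nhds.1 hv j).eventually_lt (tendsto_pi_nhds.1 hv x) hx
  obtain ⟨t, ht, hlt⟩ := (h.and_eventually hev).exists
  exact (Set.ncard_le_ncard hlt (Set.toFinite _)).trans_lt ht

theorem le_of_frequently_notMem_topSet {ι : Type*} {L : Filter ι} {v : ι → Fin n → ℝ}
    {w : Fin n → ℝ} {j x : Fin n} (hv : Tendsto v L (𝓝 w))
    (h : ∃ᶠ t in L, j ∉ topSet k (v t) ∧ x ∈ topSet k (v t)) : w j ≤ w x :=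
  (isClosed_le (continuous_apply j) (continuous_apply x) :
      IsClosed {u : Fin n → ℝ | u j ≤ u x}).mem_of_frequently_of_tendsto
    (h.mono fun _ ht => (lt_of_notMem_topSet ht.1 ht.2).le) hv

end TopSet

def IsKthLargest {n : ℕ} (k : ℕ) (w : Fin n → ℝ) (r : ℝ) : Prop :=
  {x | r < w x}.ncard < k ∧ k ≤ {x | r ≤ w x}.ncard

theorem IsKthLargest.le {n k : ℕ} {w : Fin n → ℝ} {r r' : ℝ}
    (h : IsKthLargest k w r) (h' : IsKthLargest k w r') : r ≤ r' := by
  by_contra! hlt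
  have hsub : {x | r ≤ w x} ⊆ {x | r' < w x} := fun x hx => hlt.trans_le hx
  exact (h'.1.trans_le' (Set.ncard_le_ncard hsub (Set.toFinite _))).not_ge h.2

theorem IsKthLargest.unique {n k : ℕ} {w : Fin n → ℝ} {r r' : ℝ}
    (h : IsKthLargest k w r) (h' : IsKthLargest k w r') : r = r' :=
  (h.le h').antisymm (h'.le h)

section Gossip

variable {m n k : ℕ}

def meetingTimes (p q : ℕ → Fin m) (a b : Fin m) : Set ℕ :=
  {t | (p t = a ∧ q t = b) ∨ (p t = b ∧ q t = a)}

/-- The paper's `S^∞_{ab}`. -/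
def selectedInfOften (p q : ℕ → Fin m) (S : ℕ → Set (Fin n)) (a b : Fin m) : Set (Fin n) :=
  {j | ∃ᶠ t in atTop, t ∈ meetingTimes p q a b ∧ j ∈ S t}

structure IsTopKGossipLimit (k : ℕ) (p q : ℕ → Fin m) (X : ℕ → Fin m → Fin n → ℝ)
    (S : ℕ → Set (Fin n)) (Xinf : Fin m → Fin n → ℝ) : Prop where
  selection : ∀ t, S t = topSet k (X t (p t)) ∪ topSet k (X t (q t))
  averaging : ∀ t i j, (i = p t ∨ i = q t) → j ∈ S t →
    X (t + 1) i j = (X t (p t) j + X t (q t) j) / 2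
  tendsto : Tendsto X atTop (𝓝 Xinf)

variable {p q : ℕ → Fin m} {X : ℕ → Fin m → Fin n → ℝ} {S : ℕ → Set (Fin n)}
  {Xinf : Fin m → Fin n → ℝ} {a b d : Fin m} {t : ℕ} {j l x : Fin n}

theorem meetingTimes_comm (p q : ℕ → Fin m) (a b : Fin m) :
    meetingTimes p q a b = meetingTimes p q b a :=
  Set.ext fun _ => or_comm

theorem frequently_mem_meetingTimes_of_adj
    (hadj : (SimpleGraph.fromRel fun a b => (meetingTimes p q a b).Infinite).Adj a b) :
    ∃ᶠ t in atTop, t ∈ meetingTimes p q a b := by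
  obtain ⟨-, hab | hba⟩ := hadj
  · exact Nat.frequently_atTop_iff_infinite.2 hab
  · rw [meetingTimes_comm]
    exact Nat.frequently_atTop_iff_infinite.2 hba

theorem eventually_subset_selectedInfOften (p q : ℕ → Fin m) (S : ℕ → Set (Fin n))
    (a b : Fin m) :
    ∀ᶠ t in atTop, t ∈ meetingTimes p q a b → S t ⊆ selectedInfOften p q S a b := by
  have : ∀ j, ∀ᶠ t in atTop,
      t ∈ meetingTimes p q a b → j ∈ S t → j ∈ selectedInfOften p q S a b := by
    intro j
    by_cases hj : j ∈ selectedInfOften p q S a b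
    · exact .of_forall fun _ _ _ => hj
    · exact (not_frequently.1 hj).mono fun t ht hmeet hjS => absurd ⟨hmeet, hjS⟩ ht
  exact (eventually_all.2 this).mono fun t ht hmeet j => ht j hmeet

namespace IsTopKGossipLimit

theorem tendsto_agent (h : IsTopKGossipLimit k p q X S Xinf) (i : Fin m) :
    Tendsto (fun t => X t i) atTop (𝓝 (Xinf i)) :=
  tendsto_pi_nhds.1 h.tendsto i

theorem selection_of_mem_meetingTimes (h : IsTopKGossipLimit k p q X S Xinf)
    (ht : t ∈ meetingTimes p q a b) : S t = topSet k (X t a) ∪ topSet k (X t b) := by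
  rcases ht with ⟨ha, hb⟩ | ⟨ha, hb⟩
  · rw [h.selection, ha, hb]
  · rw [h.selection, ha, hb, Set.union_comm]

theorem topSet_subset (h : IsTopKGossipLimit k p q X S Xinf)
    (ht : t ∈ meetingTimes p q a b) (hd : d = a ∨ d = b) : topSet k (X t d) ⊆ S t := by
  rw [h.selection_of_mem_meetingTimes ht]
  rcases hd with rfl | rfl
  exacts [Set.subset_union_left, Set.subset_union_right]

theorem consensus (h : IsTopKGossipLimit k p q X S Xinf)
    (hx : x ∈ selectedInfOften p q S a b) : Xinf a x = Xinf b x := by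
  have hlim : ∀ i, Tendsto (fun t => X (t + 1) i x) atTop (𝓝 (Xinf i x)) := fun i =>
    (tendsto_add_atTop_iff_nat 1).2 (tendsto_pi_nhds.1 (h.tendsto_agent i) x)
  refine tendsto_nhds_unique_of_frequently_eq (hlim a) (hlim b) (hx.mono ?_)
  rintro t ⟨hmeet, hxS⟩
  have hab : (a = p t ∨ a = q t) ∧ (b = p t ∨ b = q t) := by
    rcases hmeet with ⟨rfl, rfl⟩ | ⟨rfl, rfl⟩ <;> simp
  rw [h.averaging t a x hab.1 hxS, h.averaging t b x hab.2 hxS]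

theorem eq_of_mem_selectedInfOften (h : IsTopKGossipLimit k p q X S Xinf)
    (hd : d = a ∨ d = b) (hx : x ∈ selectedInfOften p q S a b) : Xinf d x = Xinf a x := by
  rcases hd with rfl | rfl
  exacts [rfl, (h.consensus hx).symm]

theorem le_ncard_selectedInfOften (h : IsTopKGossipLimit k p q X S Xinf) (hkn : k ≤ n)
    (hE : ∃ᶠ t in atTop, t ∈ meetingTimes p q a b) :
    k ≤ (selectedInfOften p q S a b).ncard := by
  obtain ⟨t, hmeet, hsub⟩ :=
    (hE.and_eventually (eventually_subset_selectedInfOften p q S a b)).exists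
  exact (le_ncard_topSet hkn _).trans <| Set.ncard_le_ncard
    ((h.topSet_subset hmeet (Or.inl rfl)).trans (hsub hmeet)) (Set.toFinite _)

theorem ncard_selectedInfOften_gt_lt (h : IsTopKGossipLimit k p q X S Xinf)
    (hl : l ∈ selectedInfOften p q S a b) :
    {x | x ∈ selectedInfOften p q S a b ∧ Xinf a l < Xinf a x}.ncard < k := by
  have hor : ∃ᶠ t in atTop, l ∈ topSet k (X t a) ∨ l ∈ topSet k (X t b) :=
    hl.mono fun t ⟨hmeet, hlS⟩ => by rwa [h.selection_of_mem_meetingTimes hmeet] at hlS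
  obtain ⟨c, hc, hfreq⟩ :
      ∃ c, (c = a ∨ c = b) ∧ ∃ᶠ t in atTop, l ∈ topSet k (X t c) := by
    rcases frequently_or_distrib.1 hor with h' | h'
    exacts [⟨a, Or.inl rfl, h'⟩, ⟨b, Or.inr rfl, h'⟩]
  have htop : l ∈ topSet k (Xinf c) := mem_topSet_of_frequently (h.tendsto_agent c) hfreq
  refine (Set.ncard_le_ncard ?_ (Set.toFinite _)).trans_lt htop
  rintro x ⟨hx, hlt⟩
  show Xinf c l < Xinf c x
  rwa [h.eq_of_mem_selectedInfOften hc hl, h.eq_of_mem_selectedInfOften hc hx]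

theorem le_of_notMem_selectedInfOften (h : IsTopKGossipLimit k p q X S Xinf) (hkn : k ≤ n)
    (hE : ∃ᶠ t in atTop, t ∈ meetingTimes p q a b) (hd : d = a ∨ d = b)
    (hj : j ∉ selectedInfOften p q S a b) (hl : l ∈ selectedInfOften p q S a b) :
    Xinf d j ≤ Xinf a l := by
  by_contra! hlt
  have hgood : ∃ᶠ t in atTop,
      j ∉ topSet k (X t d) ∧ topSet k (X t d) ⊆ selectedInfOften p q S a b :=
    (hE.and_eventually (eventually_subset_selectedInfOften p q S a b)).mono
      fun t ⟨hmeet, hsub⟩ => ⟨fun hjt => hj (hsub hmeet (h.topSet_subset hmeet hd hjt)),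
        (h.topSet_subset hmeet hd).trans (hsub hmeet)⟩
  -- finitely many possible top sets, so one of them recurs
  obtain ⟨L, hL⟩ : ∃ L, ∃ᶠ t in atTop, (j ∉ topSet k (X t d) ∧
      topSet k (X t d) ⊆ selectedInfOften p q S a b) ∧ topSet k (X t d) = L :=
    frequently_exists.1 (hgood.mono fun t ht => ⟨_, ht, rfl⟩)
  obtain ⟨t, ⟨-, hLsub⟩, rfl⟩ := hL.exists
  have hbeat : ∀ x ∈ topSet k (X t d), Xinf d j ≤ Xinf d x := fun x hx =>
    le_of_frequently_notMem_topSet (h.tendsto_agent d)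
      (hL.mono fun s ⟨⟨hjs, _⟩, hs⟩ => ⟨hjs, hs ▸ hx⟩)
  have hsub : topSet k (X t d) ⊆
      {x | x ∈ selectedInfOften p q S a b ∧ Xinf a l < Xinf a x} := fun x hx =>
    ⟨hLsub hx, by
      rw [← h.eq_of_mem_selectedInfOften hd (hLsub hx)]
      exact hlt.trans_le (hbeat x hx)⟩
  exact (h.ncard_selectedInfOften_gt_lt hl).not_ge
    ((le_ncard_topSet hkn _).trans (Set.ncard_le_ncard hsub (Set.toFinite _)))

theorem isKthLargest_of_forall_le (h : IsTopKGossipLimit k p q X S Xinf) (hkn : k ≤ n)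
    (hE : ∃ᶠ t in atTop, t ∈ meetingTimes p q a b) (hd : d = a ∨ d = b)
    (hl : l ∈ selectedInfOften p q S a b)
    (hmin : ∀ x ∈ selectedInfOften p q S a b, Xinf a l ≤ Xinf a x) :
    IsKthLargest k (Xinf d) (Xinf a l) := by
  constructor
  · refine (Set.ncard_le_ncard (fun x (hx : Xinf a l < Xinf d x) => ?_)
      (Set.toFinite _)).trans_lt (h.ncard_selectedInfOften_gt_lt hl)
    by_cases hxD : x ∈ selectedInfOften p q S a b
    · exact ⟨hxD, h.eq_of_mem_selectedInfOften hd hxD ▸ hx⟩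
    · exact absurd (h.le_of_notMem_selectedInfOften hkn hE hd hxD hl) (not_le.2 hx)
  · refine (h.le_ncard_selectedInfOften hkn hE).trans
      (Set.ncard_le_ncard (fun x hx => ?_) (Set.toFinite _))
    show Xinf a l ≤ Xinf d x
    rw [h.eq_of_mem_selectedInfOften hd hx]
    exact hmin x hx

theorem exists_sInf_eq (h : IsTopKGossipLimit k p q X S Xinf) (hk : 1 ≤ k) (hkn : k ≤ n)
    (hE : ∃ᶠ t in atTop, t ∈ meetingTimes p q a b) :
    ∃ l ∈ selectedInfOften p q S a b, (∀ x ∈ selectedInfOften p q S a b,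
      Xinf a l ≤ Xinf a x) ∧ sInf (Xinf a '' selectedInfOften p q S a b) = Xinf a l := by
  have hne : (selectedInfOften p q S a b).Nonempty :=
    Set.nonempty_of_ncard_ne_zero (by have := h.le_ncard_selectedInfOften hkn hE; omega)
  obtain ⟨l, hl, hmin⟩ := Set.exists_min_image _ (Xinf a) (Set.toFinite _) hne
  exact ⟨l, hl, hmin,
    IsLeast.csInf_eq ⟨Set.mem_image_of_mem _ hl, Set.forall_mem_image.2 hmin⟩⟩

theorem isKthLargest_sInf (h : IsTopKGossipLimit k p q X S Xinf) (hk : 1 ≤ k) (hkn : k ≤ n)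
    (hE : ∃ᶠ t in atTop, t ∈ meetingTimes p q a b) (hd : d = a ∨ d = b) :
    IsKthLargest k (Xinf d) (sInf (Xinf a '' selectedInfOften p q S a b)) := by
  obtain ⟨l, hl, hmin, heq⟩ := h.exists_sInf_eq hk hkn hE
  rw [heq]
  exact h.isKthLargest_of_forall_le hkn hE hd hl hmin

theorem le_sInf_of_notMem (h : IsTopKGossipLimit k p q X S Xinf) (hk : 1 ≤ k) (hkn : k ≤ n)
    (hE : ∃ᶠ t in atTop, t ∈ meetingTimes p q a b) (hd : d = a ∨ d = b)
    (hj : j ∉ selectedInfOften p q S a b) :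
    Xinf d j ≤ sInf (Xinf a '' selectedInfOften p q S a b) := by
  obtain ⟨l, hl, -, heq⟩ := h.exists_sInf_eq hk hkn hE
  rw [heq]
  exact h.le_of_notMem_selectedInfOften hkn hE hd hj hl

theorem le_and_isKthLargest_of_frequently_meet (h : IsTopKGossipLimit k p q X S Xinf)
    (hk : 1 ≤ k) (hkn : k ≤ n) (hE : ∃ᶠ t in atTop, t ∈ meetingTimes p q a b) {r : ℝ}
    (hja : Xinf a j ≤ r) (ha : IsKthLargest k (Xinf a) r) :
    Xinf b j ≤ r ∧ IsKthLargest k (Xinf b) r := by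
  have hr := (h.isKthLargest_sInf hk hkn hE (Or.inl rfl)).unique ha
  refine ⟨?_, hr ▸ h.isKthLargest_sInf hk hkn hE (Or.inr rfl)⟩
  by_cases hj : j ∈ selectedInfOften p q S a b
  · exact h.consensus hj ▸ hja
  · exact hr ▸ h.le_sInf_of_notMem hk hkn hE (Or.inr rfl) hj

end IsTopKGossipLimit

end Gossip

theorem stmt10_general (m n k : ℕ) (hk : 1 ≤ k) (hkn : k ≤ n)
    (p q : ℕ → Fin m)
    (X : ℕ → Fin m → Fin n → ℝ)
    (S : ℕ → Set (Fin n))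
    (hS : ∀ t, S t = topSet k (X t (p t)) ∪ topSet k (X t (q t)))
    (hX1 : ∀ t (i : Fin m) (j : Fin n), (i = p t ∨ i = q t) → j ∈ S t →
      X (t + 1) i j = (X t (p t) j + X t (q t) j) / 2)
    (hconn : (SimpleGraph.fromRel (fun a b =>
      {t : ℕ | (p t = a ∧ q t = b) ∨ (p t = b ∧ q t = a)}.Infinite)).Connected)
    (Xinf : Fin m → Fin n → ℝ)
    (hlim : ∀ (i : Fin m) (j : Fin n),
      Tendsto (fun t => X t i j) atTop (𝓝 (Xinf i j)))
    (i₁ i₂ : Fin m)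
    (hE : {t : ℕ | (p t = i₁ ∧ q t = i₂) ∨ (p t = i₂ ∧ q t = i₁)}.Infinite)
    (Sinf : Set (Fin n))
    (hSinf : Sinf = {j : Fin n |
      {t : ℕ | ((p t = i₁ ∧ q t = i₂) ∨ (p t = i₂ ∧ q t = i₁)) ∧
        j ∈ S t}.Infinite})
    (α : ℝ) (hα : α = sInf ((fun j => Xinf i₁ j) '' Sinf)) :
    ∀ j : Fin n, j ∉ Sinf → ∀ i : Fin m, Xinf i j ≤ α := by
  intro j hj i
  have h : IsTopKGossipLimit k p q X S Xinf :=
    ⟨hS, hX1, tendsto_pi_nhds.2 fun i => tendsto_pi_nhds.2 (hlim i)⟩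
  have hSinf' : Sinf = selectedInfOften p q S i₁ i₂ :=
    hSinf.trans (Set.ext fun _ => Nat.frequently_atTop_iff_infinite.symm)
  have hE' := Nat.frequently_atTop_iff_infinite.2 hE
  rw [hSinf'] at hj hα
  suffices Xinf i j ≤ α ∧ IsKthLargest k (Xinf i) α from this.1
  induction (SimpleGraph.reachable_iff_reflTransGen _ _).1 (hconn.preconnected i₁ i) with
  | refl =>
    exact hα ▸ ⟨h.le_sInf_of_notMem hk hkn hE' (Or.inl rfl) hj,
      h.isKthLargest_sInf hk hkn hE' (Or.inl rfl)⟩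
  | tail _ hadj ih =>
    exact h.le_and_isKthLargest_of_frequently_meet hk hkn
      (frequently_mem_meetingTimes_of_adj hadj) ih.1 ih.2

/-- In the generalized top-k selective gossiping trajectory with
connected connectivity graph, for any edge {i₁,i₂}, letting
α_{i₁i₂} = min_{j ∈ S^∞_{i₁i₂}} X_{i₁j}(∞), every agent's limiting opinion on
any candidate j ∉ S^∞_{i₁i₂} is at most α_{i₁i₂}. -/
theorem stmt10 (m n k : ℕ) (hm : 2 ≤ m) (hk : 1 ≤ k) (hkn : k ≤ n)
    (p q : ℕ → Fin m) (hpq : ∀ t, p t ≠ q t)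
    (X : ℕ → Fin m → Fin n → ℝ)
    (S : ℕ → Set (Fin n))
    (hS : ∀ t, S t = topSet k (X t (p t)) ∪ topSet k (X t (q t)))
    (hX1 : ∀ t (i : Fin m) (j : Fin n), (i = p t ∨ i = q t) → j ∈ S t →
      X (t + 1) i j = (X t (p t) j + X t (q t) j) / 2)
    (hX2 : ∀ t (i : Fin m) (j : Fin n), ¬((i = p t ∨ i = q t) ∧ j ∈ S t) →
      X (t + 1) i j = X t i j)
    (hconn : (SimpleGraph.fromRel (fun a b =>
      {t : ℕ | (p t = a ∧ q t = b) ∨ (p t = b ∧ q t = a)}.Infinite)).Connected)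
    (Xinf : Fin m → Fin n → ℝ)
    (hlim : ∀ (i : Fin m) (j : Fin n),
      Tendsto (fun t => X t i j) atTop (𝓝 (Xinf i j)))
    (i₁ i₂ : Fin m) (hne : i₁ ≠ i₂)
    (hE : {t : ℕ | (p t = i₁ ∧ q t = i₂) ∨ (p t = i₂ ∧ q t = i₁)}.Infinite)
    (Sinf : Set (Fin n))
    (hSinf : Sinf = {j : Fin n |
      {t : ℕ | ((p t = i₁ ∧ q t = i₂) ∨ (p t = i₂ ∧ q t = i₁)) ∧
        j ∈ S t}.Infinite})
    (α : ℝ) (hα : α = sInf ((fun j => Xinf i₁ j) '' Sinf)) :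
    ∀ j : Fin n, j ∉ Sinf → ∀ i : Fin m, Xinf i j ≤ α :=
  stmt10_general m n k hk hkn p q X S hS hX1 hconn Xinf hlim i₁ i₂ hE Sinf hSinf α hα
end

section
/- Consider the generalized top-k selective gossiping trajectory with m ≥ 2 agents, n ≥ 1 candidates, and k ∈ [n], assume the connectivity graph G = ([m], E) is connected, and let X(∞) = lim_{t→∞} X(t) denote the (existing) entrywise limit. Then for any two edges {i₁,i₂} ∈ E and {i₁′,i₂′} ∈ E, one has α_{i₁i₂} = α_{i₁′i₂′}; that is, the minimum limiting value over the infinitely-often discussed candidates is independent of the choice of communicating pair. -/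
/-!
The key inequality is `α_ab ≤ α_ac` for any two edges at `a`. If it failed, every candidate
discussed infinitely often by `a` and `b` would end above `w := α_ac`; since the top `k`
candidates of `a` are discussed at each meeting, at least `k` limiting opinions of `a` exceed
`w`. The minimiser `j` of `α_ac` is infinitely often among the top `k` of `a` or of `c`, hence
lies in the top `k` of the limit `Xinf a` or `Xinf c`. But the candidates that are infinitely
often among the top `k` of `a` while meeting `c` are at least `k`, lie in the top `k` of
`Xinf a` (so end above `w`), and are discussed by `a` and `c` (so `Xinf c` agrees there): this
puts `k` candidates strictly above `j` in either limit. Since the limits of `a` and `b` agree on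
the candidates they discuss infinitely often, `α_ab = α_ba`, and the equality propagates along
walks of the connected graph.
-/

open Filter Topology

section TopSet

variable {n k : ℕ}

theorem lt_of_le_ncard_of_mem_topSet {v : Fin n → ℝ} {w : ℝ} {j : Fin n}
    (hw : k ≤ {l | w < v l}.ncard) (hj : j ∈ topSet k v) : w < v j := by
  by_contra! hle
  have hsub : {l | w < v l} ⊆ {l | v j < v l} := fun l hl => hle.trans_lt hl
  exact (hw.trans (Set.ncard_le_ncard hsub)).not_gt hj

theorem mem_topSet_of_tendsto {α : Type*} {l : Filter α} {Y : α → Fin n → ℝ} {v : Fin n → ℝ}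
    (hY : ∀ j, Tendsto (fun t => Y t j) l (𝓝 (v j))) {j : Fin n}
    (hj : ∃ᶠ t in l, j ∈ topSet k (Y t)) : j ∈ topSet k v := by
  have hev : ∀ᶠ t in l, ∀ i, v j < v i → Y t j < Y t i := by
    refine eventually_all.2 fun i => ?_
    by_cases hji : v j < v i
    · exact ((hY j).eventually_lt (hY i) hji).mono fun _ ht _ => ht
    · exact Eventually.of_forall fun _ h => absurd h hji
  obtain ⟨t, hjt, ht⟩ := (hj.and_eventually hev).exists
  exact (Set.ncard_le_ncard fun i hi => ht i hi).trans_lt hjt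

end TopSet

section Frequently

variable {α ι : Type*} [Finite ι] {l : Filter α}

theorem eventually_subset_setOf_frequently_mem (F : α → Set ι) :
    ∀ᶠ t in l, F t ⊆ {i | ∃ᶠ s in l, i ∈ F s} := by
  refine eventually_all.2 fun i => ?_
  by_cases hi : ∃ᶠ s in l, i ∈ F s
  · exact Eventually.of_forall fun _ _ => hi
  · exact (not_frequently.1 hi).mono fun _ h h' => absurd h' h

theorem le_ncard_setOf_frequently_mem {F : α → Set ι} {k : ℕ}
    (hF : ∃ᶠ t in l, k ≤ (F t).ncard) : k ≤ {i | ∃ᶠ s in l, i ∈ F s}.ncard := by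
  obtain ⟨t, hkt, hsub⟩ := (hF.and_eventually (eventually_subset_setOf_frequently_mem F)).exists
  exact hkt.trans (Set.ncard_le_ncard hsub)

end Frequently

section Gossip

variable {m n k : ℕ} {p q : ℕ → Fin m} {X : ℕ → Fin m → Fin n → ℝ} {S : ℕ → Set (Fin n)}
  {Xinf : Fin m → Fin n → ℝ} {a b c : Fin m}

def meetTimes (p q : ℕ → Fin m) (a b : Fin m) : Set ℕ :=
  {t | (p t = a ∧ q t = b) ∨ (p t = b ∧ q t = a)}

def meetFilter (p q : ℕ → Fin m) (a b : Fin m) : Filter ℕ :=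
  atTop ⊓ 𝓟 (meetTimes p q a b)

def meetGraph (p q : ℕ → Fin m) : SimpleGraph (Fin m) :=
  SimpleGraph.fromRel fun a b => (meetTimes p q a b).Infinite

/-- `S^∞_ab`. -/
def discussed (p q : ℕ → Fin m) (S : ℕ → Set (Fin n)) (a b : Fin m) : Set (Fin n) :=
  {j | {t | t ∈ meetTimes p q a b ∧ j ∈ S t}.Infinite}

/-- `α_ab`; the set is finite and, under the assumptions below, nonempty, so this is its
minimum. -/
noncomputable def alpha (p q : ℕ → Fin m) (S : ℕ → Set (Fin n)) (Xinf : Fin m → Fin n → ℝ)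
    (a b : Fin m) : ℝ :=
  sInf ((fun j => Xinf a j) '' discussed p q S a b)

def frequentTop (k : ℕ) (p q : ℕ → Fin m) (X : ℕ → Fin m → Fin n → ℝ) (a b : Fin m) :
    Set (Fin n) :=
  {j | ∃ᶠ t in meetFilter p q a b, j ∈ topSet k (X t a)}

theorem meetTimes_comm (p q : ℕ → Fin m) (a b : Fin m) :
    meetTimes p q a b = meetTimes p q b a :=
  Set.ext fun _ => or_comm

theorem meetFilter_comm (p q : ℕ → Fin m) (a b : Fin m) :
    meetFilter p q a b = meetFilter p q b a := by
  rw [meetFilter, meetFilter, meetTimes_comm]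

theorem discussed_comm (p q : ℕ → Fin m) (S : ℕ → Set (Fin n)) (a b : Fin m) :
    discussed p q S a b = discussed p q S b a := by
  rw [discussed, discussed, meetTimes_comm]

theorem meetFilter_neBot (hab : (meetTimes p q a b).Infinite) : (meetFilter p q a b).NeBot :=
  frequently_mem_iff_neBot.1 (Nat.frequently_atTop_iff_infinite.2 hab)

theorem eventually_mem_meetTimes : ∀ᶠ t in meetFilter p q a b, t ∈ meetTimes p q a b :=
  mem_inf_of_right (mem_principal_self _)

theorem mem_discussed_iff {j : Fin n} :
    j ∈ discussed p q S a b ↔ ∃ᶠ t in meetFilter p q a b, j ∈ S t := by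
  rw [meetFilter, frequently_inf_principal, Nat.frequently_atTop_iff_infinite]
  rfl

theorem selected_eq_of_mem_meetTimes
    (hS : ∀ t, S t = topSet k (X t (p t)) ∪ topSet k (X t (q t)))
    {t : ℕ} (ht : t ∈ meetTimes p q a b) : S t = topSet k (X t a) ∪ topSet k (X t b) := by
  rcases ht with ⟨hp, hq⟩ | ⟨hp, hq⟩
  · rw [hS, hp, hq]
  · rw [hS, hp, hq, Set.union_comm]

theorem limit_eq_of_mem_discussed
    (hX1 : ∀ t (i : Fin m) (j : Fin n), (i = p t ∨ i = q t) → j ∈ S t →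
      X (t + 1) i j = (X t (p t) j + X t (q t) j) / 2)
    (hlim : ∀ i j, Tendsto (fun t => X t i j) atTop (𝓝 (Xinf i j)))
    {j : Fin n} (hj : j ∈ discussed p q S a b) : Xinf a j = Xinf b j := by
  have hshift : ∀ i, Tendsto (fun t => X (t + 1) i j) (meetFilter p q a b) (𝓝 (Xinf i j)) :=
    fun i => ((hlim i j).comp (tendsto_add_atTop_nat 1)).mono_left inf_le_left
  refine tendsto_nhds_unique_of_frequently_eq (hshift a) (hshift b) ?_
  refine (mem_discussed_iff.1 hj).mp (eventually_mem_meetTimes.mono fun t ht hjt => ?_)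
  have hpq : (a = p t ∨ a = q t) ∧ (b = p t ∨ b = q t) := by
    rcases ht with ⟨hp, hq⟩ | ⟨hp, hq⟩ <;> simp [hp, hq]
  rw [hX1 t a j hpq.1 hjt, hX1 t b j hpq.2 hjt]

theorem alpha_comm
    (hX1 : ∀ t (i : Fin m) (j : Fin n), (i = p t ∨ i = q t) → j ∈ S t →
      X (t + 1) i j = (X t (p t) j + X t (q t) j) / 2)
    (hlim : ∀ i j, Tendsto (fun t => X t i j) atTop (𝓝 (Xinf i j))) (a b : Fin m) :
    alpha p q S Xinf a b = alpha p q S Xinf b a := by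
  calc alpha p q S Xinf a b = sInf ((fun j => Xinf b j) '' discussed p q S a b) :=
        congrArg sInf (Set.image_congr fun _ hj => limit_eq_of_mem_discussed hX1 hlim hj)
    _ = alpha p q S Xinf b a := by rw [alpha, discussed_comm]

theorem le_ncard_frequentTop (hkn : k ≤ n) (hab : (meetTimes p q a b).Infinite) :
    k ≤ (frequentTop k p q X a b).ncard :=
  have := meetFilter_neBot hab
  le_ncard_setOf_frequently_mem (Frequently.of_forall fun t => le_ncard_topSet hkn (X t a))

theorem frequentTop_subset_discussed
    (hS : ∀ t, S t = topSet k (X t (p t)) ∪ topSet k (X t (q t))) :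
    frequentTop k p q X a b ⊆ discussed p q S a b := fun _ hj =>
  mem_discussed_iff.2 <| hj.mp <| eventually_mem_meetTimes.mono fun _ ht hjt =>
    selected_eq_of_mem_meetTimes hS ht ▸ Or.inl hjt

theorem discussed_subset_frequentTop_union
    (hS : ∀ t, S t = topSet k (X t (p t)) ∪ topSet k (X t (q t))) :
    discussed p q S a b ⊆ frequentTop k p q X a b ∪ frequentTop k p q X b a := fun j hj => by
  have hor : ∃ᶠ t in meetFilter p q a b, j ∈ topSet k (X t a) ∨ j ∈ topSet k (X t b) :=
    (mem_discussed_iff.1 hj).mp <| eventually_mem_meetTimes.mono fun _ ht hjt => by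
      rwa [selected_eq_of_mem_meetTimes hS ht] at hjt
  rw [frequently_or_distrib] at hor
  rwa [frequentTop, frequentTop, meetFilter_comm p q b a]

theorem frequentTop_subset_topSet_limit
    (hlim : ∀ i j, Tendsto (fun t => X t i j) atTop (𝓝 (Xinf i j))) :
    frequentTop k p q X a b ⊆ topSet k (Xinf a) := fun _ hj =>
  mem_topSet_of_tendsto (fun j => (hlim a j).mono_left inf_le_left) hj

theorem discussed_nonempty (hk : 1 ≤ k) (hkn : k ≤ n)
    (hS : ∀ t, S t = topSet k (X t (p t)) ∪ topSet k (X t (q t)))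
    (hab : (meetTimes p q a b).Infinite) : (discussed p q S a b).Nonempty :=
  Set.nonempty_of_ncard_ne_zero <| by
    have := (le_ncard_frequentTop (X := X) hkn hab).trans
      (Set.ncard_le_ncard (frequentTop_subset_discussed hS))
    omega

theorem alpha_le_alpha (hk : 1 ≤ k) (hkn : k ≤ n)
    (hS : ∀ t, S t = topSet k (X t (p t)) ∪ topSet k (X t (q t)))
    (hX1 : ∀ t (i : Fin m) (j : Fin n), (i = p t ∨ i = q t) → j ∈ S t →
      X (t + 1) i j = (X t (p t) j + X t (q t) j) / 2)
    (hlim : ∀ i j, Tendsto (fun t => X t i j) atTop (𝓝 (Xinf i j)))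
    (hab : (meetTimes p q a b).Infinite) (hac : (meetTimes p q a c).Infinite) :
    alpha p q S Xinf a b ≤ alpha p q S Xinf a c := by
  obtain ⟨j, hj, hjw⟩ : alpha p q S Xinf a c ∈ (fun j => Xinf a j) '' discussed p q S a c :=
    ((discussed_nonempty hk hkn hS hac).image _).csInf_mem (Set.toFinite _)
  set w := alpha p q S Xinf a c
  suffices ∃ i ∈ discussed p q S a b, Xinf a i ≤ w by
    obtain ⟨i, hi, hiw⟩ := this
    exact (csInf_le (Set.toFinite _).bddBelow (Set.mem_image_of_mem _ hi)).trans hiw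
  by_contra! habove
  have hk_above : k ≤ {l | w < Xinf a l}.ncard :=
    (le_ncard_frequentTop hkn hab).trans <| Set.ncard_le_ncard fun l hl =>
      habove l (frequentTop_subset_discussed hS hl)
  obtain ⟨r, hr, hjr⟩ : ∃ r, (∀ i ∈ discussed p q S a c, Xinf r i = Xinf a i) ∧
      j ∈ topSet k (Xinf r) := by
    rcases discussed_subset_frequentTop_union hS hj with hja | hjc
    · exact ⟨a, fun _ _ => rfl, frequentTop_subset_topSet_limit hlim hja⟩
    · exact ⟨c, fun i hi => (limit_eq_of_mem_discussed hX1 hlim hi).symm,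
        frequentTop_subset_topSet_limit hlim hjc⟩
  have hk_above_r : k ≤ {l | w < Xinf r l}.ncard :=
    (le_ncard_frequentTop hkn hac).trans <| Set.ncard_le_ncard fun l hl => by
      show w < Xinf r l
      rw [hr l (frequentTop_subset_discussed hS hl)]
      exact lt_of_le_ncard_of_mem_topSet hk_above (frequentTop_subset_topSet_limit hlim hl)
  have hwj := lt_of_le_ncard_of_mem_topSet hk_above_r hjr
  rw [hr j hj] at hwj
  exact hwj.ne' hjw

theorem alpha_eq_of_walk (hk : 1 ≤ k) (hkn : k ≤ n)
    (hS : ∀ t, S t = topSet k (X t (p t)) ∪ topSet k (X t (q t)))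
    (hX1 : ∀ t (i : Fin m) (j : Fin n), (i = p t ∨ i = q t) → j ∈ S t →
      X (t + 1) i j = (X t (p t) j + X t (q t) j) / 2)
    (hlim : ∀ i j, Tendsto (fun t => X t i j) atTop (𝓝 (Xinf i j)))
    {x y : Fin m} (walk : (meetGraph p q).Walk x y) {z z' : Fin m}
    (hxz : (meetTimes p q x z).Infinite) (hyz' : (meetTimes p q y z').Infinite) :
    alpha p q S Xinf x z = alpha p q S Xinf y z' := by
  have hedge : ∀ {a b c}, (meetTimes p q a b).Infinite → (meetTimes p q a c).Infinite →
      alpha p q S Xinf a b = alpha p q S Xinf a c := fun hab hac =>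
    (alpha_le_alpha hk hkn hS hX1 hlim hab hac).antisymm
      (alpha_le_alpha hk hkn hS hX1 hlim hac hab)
  induction walk generalizing z with
  | nil => exact hedge hxz hyz'
  | @cons x u y hxu _ ih =>
    have hxu : (meetTimes p q x u).Infinite := by
      rcases hxu.2 with h | h
      exacts [h, meetTimes_comm p q u x ▸ h]
    calc alpha p q S Xinf x z = alpha p q S Xinf x u := hedge hxz hxu
      _ = alpha p q S Xinf u x := alpha_comm hX1 hlim x u
      _ = alpha p q S Xinf y z' := ih (meetTimes_comm p q x u ▸ hxu) hyz'

end Gossip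

theorem stmt11_general (m n k : ℕ) (hk : 1 ≤ k) (hkn : k ≤ n)
    (p q : ℕ → Fin m)
    (X : ℕ → Fin m → Fin n → ℝ)
    (S : ℕ → Set (Fin n))
    (hS : ∀ t, S t = topSet k (X t (p t)) ∪ topSet k (X t (q t)))
    (hX1 : ∀ t (i : Fin m) (j : Fin n), (i = p t ∨ i = q t) → j ∈ S t →
      X (t + 1) i j = (X t (p t) j + X t (q t) j) / 2)
    (hconn : (SimpleGraph.fromRel (fun a b =>
      {t : ℕ | (p t = a ∧ q t = b) ∨ (p t = b ∧ q t = a)}.Infinite)).Connected)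
    (Xinf : Fin m → Fin n → ℝ)
    (hlim : ∀ (i : Fin m) (j : Fin n),
      Tendsto (fun t => X t i j) atTop (𝓝 (Xinf i j))) :
    ∀ i₁ i₂ i₁' i₂' : Fin m, i₁ ≠ i₂ → i₁' ≠ i₂' →
      {t : ℕ | (p t = i₁ ∧ q t = i₂) ∨ (p t = i₂ ∧ q t = i₁)}.Infinite →
      {t : ℕ | (p t = i₁' ∧ q t = i₂') ∨ (p t = i₂' ∧ q t = i₁')}.Infinite →
      sInf ((fun j => Xinf i₁ j) '' {j : Fin n |
        {t : ℕ | ((p t = i₁ ∧ q t = i₂) ∨ (p t = i₂ ∧ q t = i₁)) ∧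
          j ∈ S t}.Infinite}) =
      sInf ((fun j => Xinf i₁' j) '' {j : Fin n |
        {t : ℕ | ((p t = i₁' ∧ q t = i₂') ∨ (p t = i₂' ∧ q t = i₁')) ∧
          j ∈ S t}.Infinite}) := by
  intro i₁ i₂ i₁' i₂' _ _ h₁₂ h₁₂'
  obtain ⟨walk⟩ := hconn.preconnected i₁ i₁'
  exact alpha_eq_of_walk hk hkn hS hX1 hlim walk h₁₂ h₁₂'

/-- In the generalized top-k selective gossiping trajectory with
connected connectivity graph, the value α_{i₁i₂} = min_{j ∈ S^∞_{i₁i₂}} X_{i₁j}(∞)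
is the same for every edge {i₁,i₂} of the connectivity graph. -/
theorem stmt11 (m n k : ℕ) (hm : 2 ≤ m) (hk : 1 ≤ k) (hkn : k ≤ n)
    (p q : ℕ → Fin m) (hpq : ∀ t, p t ≠ q t)
    (X : ℕ → Fin m → Fin n → ℝ)
    (S : ℕ → Set (Fin n))
    (hS : ∀ t, S t = topSet k (X t (p t)) ∪ topSet k (X t (q t)))
    (hX1 : ∀ t (i : Fin m) (j : Fin n), (i = p t ∨ i = q t) → j ∈ S t →
      X (t + 1) i j = (X t (p t) j + X t (q t) j) / 2)
    (hX2 : ∀ t (i : Fin m) (j : Fin n), ¬((i = p t ∨ i = q t) ∧ j ∈ S t) →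
      X (t + 1) i j = X t i j)
    (hconn : (SimpleGraph.fromRel (fun a b =>
      {t : ℕ | (p t = a ∧ q t = b) ∨ (p t = b ∧ q t = a)}.Infinite)).Connected)
    (Xinf : Fin m → Fin n → ℝ)
    (hlim : ∀ (i : Fin m) (j : Fin n),
      Tendsto (fun t => X t i j) atTop (𝓝 (Xinf i j))) :
    ∀ i₁ i₂ i₁' i₂' : Fin m, i₁ ≠ i₂ → i₁' ≠ i₂' →
      {t : ℕ | (p t = i₁ ∧ q t = i₂) ∨ (p t = i₂ ∧ q t = i₁)}.Infinite →
      {t : ℕ | (p t = i₁' ∧ q t = i₂') ∨ (p t = i₂' ∧ q t = i₁')}.Infinite →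
      sInf ((fun j => Xinf i₁ j) '' {j : Fin n |
        {t : ℕ | ((p t = i₁ ∧ q t = i₂) ∨ (p t = i₂ ∧ q t = i₁)) ∧
          j ∈ S t}.Infinite}) =
      sInf ((fun j => Xinf i₁' j) '' {j : Fin n |
        {t : ℕ | ((p t = i₁' ∧ q t = i₂') ∨ (p t = i₂' ∧ q t = i₁')) ∧
          j ∈ S t}.Infinite}) :=
  stmt11_general m n k hk hkn p q X S hS hX1 hconn Xinf hlim
end
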